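/- arXiv:1908.07066 — 6 statements merged into one kernel-verified Lean document; each statement's English description precedes it below -/
import Mathlib

section
/- Under Assumption A, for every d ∈ ℕ, lim_{n→∞} P(D_{n,1}(θ*_n) = d) = E[ (λ(ξ)^d / d!) · e^{−λ(ξ)} ]. In particular, the right-hand sides form a probability mass function on ℕ, so D_{n,1}(θ*_n) converges in distribution to an ℕ-valued random variable D with P(D = d) = E[(λ(ξ)^d/d!) e^{−λ(ξ)}]. -/
/-!
Given `ξ₀ = x`, the degree of node `0` counts which of the `n - 1` independent variables `ξ_ℓ`
exceed `θ*_n - x`, so it is binomial with parameters `n - 1` and `p_n(x) = 1 - F(θ*_n - x)`.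
Assumption A says that `n p_n(x) → λ(x)`, so by the Poisson limit theorem the conditional
probabilities converge to the Poisson weights `λ(x)^d / d! e^{-λ(x)}`; being bounded by `1`, they
may be integrated against the law of `ξ₀` by dominated convergence. For each `x` the Poisson
weights sum to `1`, and dominated convergence once more exchanges the sum and the integral.
-/

open MeasureTheory ProbabilityTheory Filter Real
open scoped Topology ENNReal

/-- Degree of node `k` in the random threshold graph on nodes `{0, …, n-1}`
with fitness variables `ξ` and threshold `θ`. -/
noncomputable def deg {Ω : Type*} (ξ : ℕ → Ω → ℝ) (n k : ℕ) (θ : ℝ) (ω : Ω) : ℕ :=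
  ((Finset.range n).filter fun ℓ => ℓ ≠ k ∧ θ < ξ k ω + ξ ℓ ω).card

lemma choose_mul_pow_mul_one_sub_pow_le_one {p : ℝ} (hp₀ : 0 ≤ p) (hp₁ : p ≤ 1) (n k : ℕ) :
    n.choose k * p ^ k * (1 - p) ^ (n - k) ≤ 1 :=
  binomial_real_singleton n k ⟨p, hp₀, hp₁⟩ ▸ measureReal_le_one

lemma tendsto_pred_choose_mul_pow_of_tendsto_mul_atTop {p : ℕ → ℝ} {r : ℝ} (k : ℕ)
    (hr : Tendsto (fun n : ℕ => n * p n) atTop (𝓝 r)) :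
    Tendsto (fun n => (n - 1).choose k * p n ^ k * (1 - p n) ^ (n - 1 - k)) atTop
      (𝓝 (exp (-r) * r ^ k / k.factorial)) := by
  rw [← tendsto_add_atTop_iff_nat 1]
  simp only [Nat.add_sub_cancel]
  refine tendsto_choose_mul_pow_of_tendsto_mul_atTop k ?_
  have hshift := hr.comp (tendsto_add_atTop_nat 1)
  have hp := (tendsto_zero_of_tendsto_mul_atTop hr).comp (tendsto_add_atTop_nat 1)
  simpa [add_mul] using hshift.sub hp

lemma hasSum_pow_div_factorial_mul_exp_neg (x : ℝ) :
    HasSum (fun k : ℕ => x ^ k / k.factorial * exp (-x)) 1 := by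
  have h := (NormedSpace.expSeries_div_hasSum_exp x).mul_right (exp (-x))
  rwa [← exp_eq_exp_ℝ, ← exp_add, add_neg_cancel, exp_zero] at h

section
variable {Ω : Type*} [MeasurableSpace Ω] {P : Measure Ω}

lemma tendsto_integral_pred_choose_mul_pow [IsFiniteMeasure P] {p : ℕ → Ω → ℝ} {r : Ω → ℝ}
    (hp : ∀ n, AEStronglyMeasurable (p n) P) (hp₀ : ∀ n ω, 0 ≤ p n ω) (hp₁ : ∀ n ω, p n ω ≤ 1)
    (hr : ∀ ω, Tendsto (fun n : ℕ => n * p n ω) atTop (𝓝 (r ω))) (k : ℕ) :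
    Tendsto (fun n => ∫ ω, (n - 1).choose k * p n ω ^ k * (1 - p n ω) ^ (n - 1 - k) ∂P) atTop
      (𝓝 (∫ ω, r ω ^ k / k.factorial * exp (-r ω) ∂P)) := by
  refine tendsto_integral_of_dominated_convergence (fun _ => 1) (fun n => ?_)
    (integrable_const 1) (fun n => ae_of_all _ fun ω => ?_) (ae_of_all _ fun ω => ?_)
  · have := hp n
    fun_prop
  · have hp := hp₀ n ω
    have hq : 0 ≤ 1 - p n ω := sub_nonneg.2 (hp₁ n ω)
    rw [norm_of_nonneg (by positivity)]
    exact choose_mul_pow_mul_one_sub_pow_le_one hp (hp₁ n ω) (n - 1) k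
  · convert tendsto_pred_choose_mul_pow_of_tendsto_mul_atTop k (hr ω) using 2
    ring

lemma hasSum_integral_pow_div_factorial_mul_exp_neg [IsProbabilityMeasure P] {r : Ω → ℝ}
    (hr : Measurable r) (hr₀ : ∀ ω, 0 ≤ r ω) :
    HasSum (fun k : ℕ => ∫ ω, r ω ^ k / k.factorial * exp (-r ω) ∂P) 1 := by
  let f : ℕ → Ω → ℝ := fun k ω => r ω ^ k / k.factorial * exp (-r ω)
  have hsum : ∀ ω, HasSum (fun k => f k ω) 1 := fun ω =>
    hasSum_pow_div_factorial_mul_exp_neg (r ω)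
  have hnorm : ∀ k ω, ‖f k ω‖ = f k ω := fun k ω =>
    norm_of_nonneg (by have := hr₀ ω; positivity)
  have hmeas : ∀ k, AEStronglyMeasurable (f k) P := fun k => by fun_prop
  have h := hasSum_integral_of_dominated_convergence (μ := P) (F := f) (f := fun _ => (1 : ℝ)) f
    hmeas (fun k => ae_of_all _ fun ω => (hnorm k ω).le)
    (ae_of_all _ fun ω => (hsum ω).summable)
    (by simp only [(hsum _).tsum_eq]; exact integrable_const 1)
    (ae_of_all _ hsum)
  rwa [integral_const, probReal_univ, one_smul] at h
end

namespace ProbabilityTheory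
open Finset

section
variable {Ω ι β : Type*} {ξ : ι → Ω → β} {B : Set β} [DecidablePred (· ∈ B)]

lemma setOf_filter_mem_eq_biInter [DecidableEq ι] {S A : Finset ι} (hAS : A ⊆ S) :
    {ω | {ℓ ∈ S | ξ ℓ ω ∈ B} = A} = ⋂ ℓ ∈ S, ξ ℓ ⁻¹' (if ℓ ∈ A then B else Bᶜ) := by
  ext ω
  simp only [Set.mem_iInter, Set.mem_preimage, Finset.ext_iff, mem_filter]
  refine ⟨fun h ℓ hℓ => ?_, fun h ℓ => ⟨fun hℓ => ?_, fun hℓA => ?_⟩⟩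
  · split_ifs with hℓA
    · exact ((h ℓ).2 hℓA).2
    · exact fun hB => hℓA ((h ℓ).1 ⟨hℓ, hB⟩)
  · by_contra hℓA
    simpa [hℓA, hℓ.2] using h ℓ hℓ.1
  · simpa [hℓA, hAS hℓA] using h ℓ (hAS hℓA)

variable [MeasurableSpace Ω] [MeasurableSpace β] {P : Measure Ω} {X : Ω → β}

lemma iIndepFun.measure_filter_mem_eq [DecidableEq ι] (hindep : iIndepFun ξ P)
    (hident : ∀ i, IdentDistrib (ξ i) X P P) (hB : MeasurableSet B) {S A : Finset ι}
    (hAS : A ⊆ S) :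
    P {ω | {ℓ ∈ S | ξ ℓ ω ∈ B} = A} = P (X ⁻¹' B) ^ #A * P (X ⁻¹' Bᶜ) ^ (#S - #A) := by
  have hC : ∀ ℓ, MeasurableSet (if ℓ ∈ A then B else Bᶜ) := fun ℓ => by
    split_ifs; exacts [hB, hB.compl]
  rw [setOf_filter_mem_eq_biInter hAS, hindep.meas_biInter fun ℓ _ => ⟨_, hC ℓ, rfl⟩,
    prod_congr rfl fun ℓ _ => (hident ℓ).measure_mem_eq (hC ℓ)]
  simp only [apply_ite, prod_ite, prod_const, filter_mem_eq_inter, inter_eq_right.2 hAS]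
  rw [filter_not, filter_mem_eq_inter, inter_eq_right.2 hAS, card_sdiff_of_subset hAS]

lemma iIndepFun.measure_card_filter_mem_eq (hmeas : ∀ i, Measurable (ξ i))
    (hindep : iIndepFun ξ P) (hident : ∀ i, IdentDistrib (ξ i) X P P) (hB : MeasurableSet B)
    (S : Finset ι) (d : ℕ) :
    P {ω | #{ℓ ∈ S | ξ ℓ ω ∈ B} = d}
      = (#S).choose d * P (X ⁻¹' B) ^ d * P (X ⁻¹' Bᶜ) ^ (#S - d) := by
  classical
  have hunion : {ω | #{ℓ ∈ S | ξ ℓ ω ∈ B} = d}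
      = ⋃ A ∈ S.powersetCard d, {ω | {ℓ ∈ S | ξ ℓ ω ∈ B} = A} := by
    ext ω
    simp only [Set.mem_ofPred_eq, Set.mem_iUnion, mem_powersetCard, exists_prop]
    exact ⟨fun h => ⟨_, ⟨filter_subset _ _, h⟩, rfl⟩, by rintro ⟨A, ⟨-, rfl⟩, rfl⟩; rfl⟩
  have hdisj : (S.powersetCard d : Set (Finset ι)).PairwiseDisjoint
      fun A => {ω | {ℓ ∈ S | ξ ℓ ω ∈ B} = A} :=
    fun A _ A' _ hAA' => Set.disjoint_left.2 fun ω h h' => hAA' (h.symm.trans h')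
  have hmeasA : ∀ A ∈ S.powersetCard d, MeasurableSet {ω | {ℓ ∈ S | ξ ℓ ω ∈ B} = A} :=
    fun A hA => by
      rw [setOf_filter_mem_eq_biInter (mem_powersetCard.1 hA).1]
      refine .biInter S.countable_toSet fun ℓ _ => hmeas ℓ ?_
      split_ifs; exacts [hB, hB.compl]
  rw [hunion, measure_biUnion_finset hdisj hmeasA, sum_congr rfl fun A hA =>
    (mem_powersetCard.1 hA).2 ▸ hindep.measure_filter_mem_eq hident hB (mem_powersetCard.1 hA).1,
    sum_const, card_powersetCard, nsmul_eq_mul, mul_assoc]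

end

variable {Ω : Type*} [MeasurableSpace Ω] {P : Measure Ω} [IsProbabilityMeasure P]

lemma IndepFun.measureReal_mem_eq_integral {α β : Type*} [MeasurableSpace α] [MeasurableSpace β]
    {X : Ω → α} {Y : Ω → β}
    (hXY : IndepFun X Y P) (hX : Measurable X) (hY : Measurable Y) {E : Set (α × β)}
    (hE : MeasurableSet E) :
    P.real {ω | (X ω, Y ω) ∈ E} = ∫ ω, P.real {ω' | (X ω, Y ω') ∈ E} ∂P := by
  have hslice : ∀ x, P.map Y (Prod.mk x ⁻¹' E) = P {ω' | (x, Y ω') ∈ E} := fun x =>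
    Measure.map_apply hY (measurable_prodMk_left hE)
  have hg : Measurable fun x => P {ω' | (x, Y ω') ∈ E} := by
    simpa only [hslice] using measurable_measure_prodMk_left (ν := P.map Y) hE
  have hlaw : P {ω | (X ω, Y ω) ∈ E} = ∫⁻ ω, P {ω' | (X ω, Y ω') ∈ E} ∂P := by
    rw [← Set.preimage_ofPred_eq, Set.ofPred_mem_eq, ← Measure.map_apply (hX.prodMk hY) hE,
      hXY.map_prod_eq_prod_map_map hX.aemeasurable hY.aemeasurable, Measure.prod_apply hE,
      lintegral_map (by simpa only [hslice] using hg) hX]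
    simp only [hslice]
  rw [measureReal_def, hlaw]
  exact (integral_toReal (hg.comp hX).aemeasurable (ae_of_all _ fun _ => measure_lt_top _ _)).symm

lemma IndepFun.measureReal_card_filter_lt_add_eq_integral {ι : Type*} [Fintype ι]
    {X X' : Ω → ℝ} {η : ι → Ω → ℝ} (hX : Measurable X) (hX' : Measurable X')
    (hη : ∀ i, Measurable (η i))
    (hXη : IndepFun X (fun ω i => η i ω) P) (hindep : iIndepFun η P)
    (hident : ∀ i, IdentDistrib (η i) X' P P) (θ : ℝ) (d : ℕ) :
    P.real {ω | #{ℓ | θ < X ω + η ℓ ω} = d} = ∫ ω, ((Fintype.card ι).choose d : ℝ)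
      * P.real {ω' | θ - X ω < X' ω'} ^ d
      * (1 - P.real {ω' | θ - X ω < X' ω'}) ^ (Fintype.card ι - d) ∂P := by
  let E : Set (ℝ × (ι → ℝ)) := {q | #{ℓ | θ < q.1 + q.2 ℓ} = d}
  have hE : MeasurableSet E := by
    refine measurableSet_eq_fun ?_ measurable_const
    simp_rw [card_filter]
    refine Finset.measurable_sum _ fun ℓ _ => Measurable.ite ?_ measurable_const measurable_const
    exact measurableSet_lt measurable_const
      (measurable_fst.add ((measurable_pi_apply ℓ).comp measurable_snd))
  refine (hXη.measureReal_mem_eq_integral hX (measurable_pi_lambda _ hη) hE).trans ?_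
  refine integral_congr_ae (ae_of_all _ fun ω => ?_)
  beta_reduce
  have hslice : {ω' | (X ω, fun i => η i ω') ∈ E}
      = {ω' | #{ℓ | η ℓ ω' ∈ Set.Ioi (θ - X ω)} = d} := by
    simp only [E, Set.mem_ofPred_eq, Set.mem_Ioi, sub_lt_iff_lt_add']
  rw [hslice, measureReal_def, hindep.measure_card_filter_mem_eq hη hident measurableSet_Ioi,
    Set.preimage_compl, prob_compl_eq_one_sub (hX' measurableSet_Ioi), card_univ]
  simp only [ENNReal.toReal_mul, ENNReal.toReal_pow, ENNReal.toReal_natCast,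
    ENNReal.toReal_sub_of_le prob_le_one ENNReal.one_ne_top, ENNReal.toReal_one]
  rfl
end ProbabilityTheory

open Finset in
lemma deg_eq_card_filter {Ω : Type*} (ξ : ℕ → Ω → ℝ) (n k : ℕ) (θ : ℝ) (ω : Ω) :
    deg ξ n k θ ω = #{ℓ : (range n).erase k | θ < ξ k ω + ξ ℓ ω} := by
  rw [deg, ← filter_filter, filter_ne', card_filter, card_filter, ← sum_coe_sort]

lemma measureReal_deg_eq_integral {Ω : Type*} [MeasurableSpace Ω] {P : Measure Ω}
    [IsProbabilityMeasure P] {ξ : ℕ → Ω → ℝ} (hmeas : ∀ i, Measurable (ξ i))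
    (hindep : iIndepFun ξ P) (hident : ∀ i, IdentDistrib (ξ i) (ξ 0) P P) (n d : ℕ) (θ : ℝ) :
    P.real {ω | deg ξ n 0 θ ω = d} = ∫ ω, ((n - 1).choose d : ℝ)
      * P.real {ω' | θ - ξ 0 ω < ξ 0 ω'} ^ d
      * (1 - P.real {ω' | θ - ξ 0 ω < ξ 0 ω'}) ^ (n - 1 - d) ∂P := by
  set T := (Finset.range n).erase 0
  have hXY : IndepFun (ξ 0) (fun ω (ℓ : T) => ξ ℓ ω) P := by
    have := (hindep.indepFun_finset {0} T (by simp [T]) hmeas).comp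
      (measurable_pi_apply ⟨0, Finset.mem_singleton_self 0⟩) measurable_id
    exact this
  have hcard : Fintype.card T = n - 1 := by
    rw [Fintype.card_coe]
    rcases n with _ | n <;> simp [T]
  simp only [deg_eq_card_filter, ← hcard]
  exact hXY.measureReal_card_filter_lt_add_eq_integral (η := fun ℓ : T => ξ ℓ) (hmeas 0)
    (hmeas 0) (fun ℓ => hmeas ℓ) (hindep.precomp Subtype.val_injective) (fun ℓ => hident ℓ) θ d

theorem stmt2_general
    {Ω : Type*} [MeasurableSpace Ω] (P : Measure Ω) [IsProbabilityMeasure P]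
    (ξ : ℕ → Ω → ℝ) (hmeas : ∀ i, Measurable (ξ i))
    (hindep : iIndepFun ξ P)
    (hident : ∀ i, IdentDistrib (ξ i) (ξ 0) P P)
    (hξnn : ∀ i ω, 0 ≤ ξ i ω)
    (F : ℝ → ℝ) (hF : ∀ x, F x = (P {ω | ξ 0 ω ≤ x}).toReal)
    -- Assumption A
    (θstar : ℕ → ℝ)
    (lam : ℝ → ℝ) (hlamnn : ∀ x, 0 ≤ x → 0 ≤ lam x)
    (hA : ∀ x, 0 ≤ x →
      Tendsto (fun n : ℕ => (n : ℝ) * (1 - F (θstar n - x))) atTop (𝓝 (lam x))) :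
    (∀ d : ℕ,
      Tendsto (fun n : ℕ => (P {ω | deg ξ n 0 (θstar n) ω = d}).toReal) atTop
        (𝓝 (∫ ω, lam (ξ 0 ω) ^ d / (d.factorial : ℝ) * Real.exp (-(lam (ξ 0 ω))) ∂P)))
    ∧ HasSum
        (fun d : ℕ => ∫ ω, lam (ξ 0 ω) ^ d / (d.factorial : ℝ) * Real.exp (-(lam (ξ 0 ω))) ∂P)
        1 := by
  set q : ℝ → ℝ := fun t => P.real {ω | t < ξ 0 ω}
  have hq : ∀ t, q t = 1 - F t := fun t => by
    rw [hF, ← measureReal_def,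
      ← probReal_compl_eq_one_sub (measurableSet_le (hmeas 0) measurable_const)]
    simp only [q, Set.compl_ofPred, not_le]
  have hqmeas : Measurable q :=
    (show Antitone q from fun _ _ hst => measureReal_mono fun _ => hst.trans_lt).measurable
  have hpmeas : ∀ n : ℕ, Measurable fun ω => q (θstar n - ξ 0 ω) := fun n =>
    hqmeas.comp (measurable_const.sub (hmeas 0))
  have hlim : ∀ ω, Tendsto (fun n : ℕ => n * q (θstar n - ξ 0 ω)) atTop (𝓝 (lam (ξ 0 ω))) :=
    fun ω => by simpa only [hq] using hA _ (hξnn 0 ω)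
  have hL : Measurable fun ω => lam (ξ 0 ω) :=
    measurable_of_tendsto_metrizable (fun n => measurable_const.mul (hpmeas n))
      (tendsto_pi_nhds.2 hlim)
  refine ⟨fun d => ?_,
    hasSum_integral_pow_div_factorial_mul_exp_neg hL fun ω => hlamnn _ (hξnn 0 ω)⟩
  simp only [← measureReal_def, measureReal_deg_eq_integral hmeas hindep hident]
  exact tendsto_integral_pred_choose_mul_pow (fun n => (hpmeas n).aestronglyMeasurable)
    (fun _ _ => measureReal_nonneg) (fun _ _ => measureReal_le_one) hlim d

/-- Under Assumption A, for every `d`,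
`P(D_{n,1}(θ*_n) = d) → E[(λ(ξ)^d/d!) e^{−λ(ξ)}]`, and the limiting values
form a probability mass function on `ℕ`. -/
theorem stmt2
    {Ω : Type*} [MeasurableSpace Ω] (P : Measure Ω) [IsProbabilityMeasure P]
    (ξ : ℕ → Ω → ℝ) (hmeas : ∀ i, Measurable (ξ i))
    (hindep : iIndepFun ξ P)
    (hident : ∀ i, IdentDistrib (ξ i) (ξ 0) P P)
    (hξnn : ∀ i ω, 0 ≤ ξ i ω)
    (F : ℝ → ℝ) (hF : ∀ x, F x = (P {ω | ξ 0 ω ≤ x}).toReal)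
    (hFcont : Continuous F) (hF0 : ∀ x ≤ (0 : ℝ), F x = 0)
    -- Assumption A
    (θstar : ℕ → ℝ) (hθpos : ∀ n, 0 < θstar n)
    (hθtop : Tendsto θstar atTop atTop)
    (lam : ℝ → ℝ) (hlamnn : ∀ x, 0 ≤ x → 0 ≤ lam x)
    (hlamne : ∃ x, 0 ≤ x ∧ lam x ≠ 0)
    (hA : ∀ x, 0 ≤ x →
      Tendsto (fun n : ℕ => (n : ℝ) * (1 - F (θstar n - x))) atTop (𝓝 (lam x))) :
    (∀ d : ℕ,
      Tendsto (fun n : ℕ => (P {ω | deg ξ n 0 (θstar n) ω = d}).toReal) atTop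
        (𝓝 (∫ ω, lam (ξ 0 ω) ^ d / (d.factorial : ℝ) * Real.exp (-(lam (ξ 0 ω))) ∂P)))
    ∧ HasSum
        (fun d : ℕ => ∫ ω, lam (ξ 0 ω) ^ d / (d.factorial : ℝ) * Real.exp (-(lam (ξ 0 ω))) ∂P)
        1 :=
  stmt2_general P ξ hmeas hindep hident hξnn F hF θstar lam hlamnn hA
end

section
/- For every integer d ≥ 2, set p(d) = (1/d!) ∫_0^∞ e^{(d−1)x} e^{−e^{x}} dx. Then p(d) = (1/d!) ∫_1^∞ t^{d−2} e^{−t} dt = (1/d!)((d−2)! − ∫_0^1 t^{d−2} e^{−t} dt), and consequently |p(d) − 1/(d(d−1))| ≤ 1/d!. In particular p(d)·d(d−1) → 1 as d → ∞, i.e., p(d) ∼ d^{−2}. -/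
/-!
Substituting `t = eˣ` turns `∫₀^∞ e^{(d-1)x} e^{-eˣ} dx` into the upper incomplete Gamma integral
`∫₁^∞ t^{d-2} e^{-t} dt = (d-2)! - ∫₀¹ t^{d-2} e^{-t} dt`. The integral over `(0,1)` lies in
`[0,1]`, and `(d-2)!/d! = 1/(d(d-1))`; so `p(d)·d(d-1)` differs from `1` by at most `1/(d-2)!`.
-/

open MeasureTheory Filter Real Set
open scoped Topology

lemma integrableOn_pow_mul_exp_neg_Ioi (k : ℕ) :
    IntegrableOn (fun t : ℝ => t ^ k * exp (-t)) (Ioi 0) := by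
  refine (GammaIntegral_convergent (s := k + 1) (by positivity)).congr_fun
    (fun t _ => ?_) measurableSet_Ioi
  simp [mul_comm]

lemma integral_pow_mul_exp_neg_Ioi (k : ℕ) :
    ∫ t in Ioi (0 : ℝ), t ^ k * exp (-t) = k.factorial := by
  rw [← Gamma_nat_eq_factorial, Gamma_eq_integral (by positivity)]
  simp [mul_comm]

lemma integral_exp_mul_exp_neg_exp_Ioi (k : ℕ) :
    ∫ x in Ioi (0 : ℝ), exp ((k + 1) * x) * exp (-exp x) =
      ∫ t in Ioi (1 : ℝ), t ^ k * exp (-t) := by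
  have himage : Ioi (1 : ℝ) = exp '' Ioi 0 := by rw [image_exp_Ioi, exp_zero]
  rw [himage, integral_image_eq_integral_abs_deriv_smul measurableSet_Ioi
    (fun x _ => (hasDerivAt_exp x).hasDerivWithinAt) exp_injective.injOn]
  refine setIntegral_congr_fun measurableSet_Ioi (fun x _ => ?_)
  rw [smul_eq_mul, abs_of_pos (exp_pos x), ← exp_nat_mul, add_mul, one_mul, exp_add]
  ring

lemma setIntegral_Ioi_eq_Ioo_add_Ioi {E : Type*} [NormedAddCommGroup E] [NormedSpace ℝ E]
    {f : ℝ → E} {a b : ℝ} (hab : a ≤ b) (hf : IntegrableOn f (Ioi a)) :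
    ∫ t in Ioi a, f t = (∫ t in Ioo a b, f t) + ∫ t in Ioi b, f t := by
  rw [← integral_Ioc_eq_integral_Ioo, ← Ioc_union_Ioi_eq_Ioi hab,
    setIntegral_union (Ioc_disjoint_Ioi le_rfl) measurableSet_Ioi
      (hf.mono_set Ioc_subset_Ioi_self) (hf.mono_set (Ioi_subset_Ioi hab))]

lemma integral_pow_mul_exp_neg_Ioi_one (k : ℕ) :
    ∫ t in Ioi (1 : ℝ), t ^ k * exp (-t) =
      (k.factorial : ℝ) - ∫ t in Ioo (0 : ℝ) 1, t ^ k * exp (-t) := by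
  rw [← integral_pow_mul_exp_neg_Ioi,
    setIntegral_Ioi_eq_Ioo_add_Ioi zero_le_one (integrableOn_pow_mul_exp_neg_Ioi k)]
  ring

lemma abs_integral_pow_mul_exp_neg_Ioo_le_one (k : ℕ) :
    |∫ t in Ioo (0 : ℝ) 1, t ^ k * exp (-t)| ≤ 1 := by
  have hle : ∀ t ∈ Ioo (0 : ℝ) 1, ‖t ^ k * exp (-t)‖ ≤ 1 := fun t ht => by
    rw [norm_mul, norm_pow, norm_of_nonneg ht.1.le, norm_of_nonneg (exp_pos _).le]
    exact mul_le_one₀ (pow_le_one₀ ht.1.le ht.2.le) (exp_pos _).le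
      (exp_le_one_iff.mpr (neg_nonpos.mpr ht.1.le))
  simpa using norm_setIntegral_le_of_norm_le_const (μ := volume) measure_Ioo_lt_top hle

lemma cast_mul_cast_sub_one_mul_factorial_sub_two {d : ℕ} (hd : 2 ≤ d) :
    (d : ℝ) * ((d : ℝ) - 1) * (d - 2).factorial = d.factorial := by
  obtain ⟨k, rfl⟩ := Nat.exists_eq_add_of_le' hd
  rw [Nat.add_sub_cancel, Nat.factorial_succ, Nat.factorial_succ]
  push_cast
  ring

lemma abs_sub_one_div_le_of_eq_factorial_sub {d : ℕ} (hd : 2 ≤ d) {x I : ℝ}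
    (hx : x = 1 / (d.factorial : ℝ) * ((d - 2).factorial - I)) (hI : |I| ≤ 1) :
    |x - 1 / ((d : ℝ) * ((d : ℝ) - 1))| ≤ 1 / (d.factorial : ℝ) := by
  have hd1 : (1 : ℝ) < d := Nat.one_lt_cast.mpr hd
  have hx' : x - 1 / ((d : ℝ) * ((d : ℝ) - 1)) = -I / d.factorial := by
    have : (d : ℝ) - 1 ≠ 0 := by linarith
    rw [hx, ← cast_mul_cast_sub_one_mul_factorial_sub_two hd]
    field_simp
    ring
  rw [hx', abs_div, abs_neg, Nat.abs_cast]
  gcongr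

lemma tendsto_mul_of_abs_sub_one_div_le {x : ℕ → ℝ}
    (hx : ∀ d : ℕ, 2 ≤ d → |x d - 1 / ((d : ℝ) * ((d : ℝ) - 1))| ≤ 1 / (d.factorial : ℝ)) :
    Tendsto (fun d : ℕ => x d * ((d : ℝ) * ((d : ℝ) - 1))) atTop (𝓝 1) := by
  have hbound : ∀ᶠ d : ℕ in atTop,
      ‖x d * ((d : ℝ) * ((d : ℝ) - 1)) - 1‖ ≤ 1 ^ (d - 2) / (d - 2).factorial := by
    filter_upwards [eventually_ge_atTop 2] with d hd
    have hd1 : (1 : ℝ) < d := Nat.one_lt_cast.mpr hd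
    have hpos : 0 < (d : ℝ) * ((d : ℝ) - 1) := mul_pos (by linarith) (sub_pos.mpr hd1)
    calc ‖x d * ((d : ℝ) * ((d : ℝ) - 1)) - 1‖
        = |x d - 1 / ((d : ℝ) * ((d : ℝ) - 1))| * ((d : ℝ) * ((d : ℝ) - 1)) := by
          rw [norm_eq_abs, ← abs_of_pos hpos, ← abs_mul, abs_of_pos hpos, sub_mul,
            one_div_mul_cancel hpos.ne']
      _ ≤ 1 / (d.factorial : ℝ) * ((d : ℝ) * ((d : ℝ) - 1)) := by gcongr; exact hx d hd
      _ = 1 ^ (d - 2) / (d - 2).factorial := by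
          have : (d : ℝ) - 1 ≠ 0 := by linarith
          rw [one_pow, ← cast_mul_cast_sub_one_mul_factorial_sub_two hd]
          field_simp
  have hlim := (FloorSemiring.tendsto_pow_div_factorial_atTop (1 : ℝ)).comp
    (tendsto_sub_atTop_nat 2)
  simpa using (squeeze_zero_norm' hbound hlim).add_const 1

/-- Properties of the limiting pmf
`p(d) = (1/d!) ∫_0^∞ e^{(d−1)x} e^{−e^x} dx` for `d ≥ 2`:
the two integral representations, the bound `|p(d) − 1/(d(d−1))| ≤ 1/d!`, and
the tail behaviour `p(d)·d(d−1) → 1`, i.e. `p(d) ∼ d⁻²`. -/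
theorem stmt6
    (p : ℕ → ℝ)
    (hp : ∀ d : ℕ, p d = (1 / (d.factorial : ℝ)) *
        ∫ x in Set.Ioi (0 : ℝ), Real.exp (((d : ℝ) - 1) * x) * Real.exp (-Real.exp x)) :
    (∀ d : ℕ, 2 ≤ d →
        p d = (1 / (d.factorial : ℝ)) * ∫ t in Set.Ioi (1 : ℝ), t ^ (d - 2) * Real.exp (-t))
    ∧ (∀ d : ℕ, 2 ≤ d →
        p d = (1 / (d.factorial : ℝ)) *
          (((d - 2).factorial : ℝ) - ∫ t in Set.Ioo (0 : ℝ) 1, t ^ (d - 2) * Real.exp (-t)))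
    ∧ (∀ d : ℕ, 2 ≤ d →
        |p d - 1 / ((d : ℝ) * ((d : ℝ) - 1))| ≤ 1 / (d.factorial : ℝ))
    ∧ Tendsto (fun d : ℕ => p d * ((d : ℝ) * ((d : ℝ) - 1))) atTop (𝓝 1) := by
  have hIoi : ∀ d : ℕ, 2 ≤ d →
      p d = (1 / (d.factorial : ℝ)) * ∫ t in Ioi (1 : ℝ), t ^ (d - 2) * exp (-t) := by
    intro d hd
    obtain ⟨k, rfl⟩ := Nat.exists_eq_add_of_le' hd
    have hexp : ((k + 2 : ℕ) : ℝ) - 1 = k + 1 := by push_cast; ring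
    rw [hp, hexp, integral_exp_mul_exp_neg_exp_Ioi, Nat.add_sub_cancel]
  have hIoo : ∀ d : ℕ, 2 ≤ d →
      p d = (1 / (d.factorial : ℝ)) *
        (((d - 2).factorial : ℝ) - ∫ t in Ioo (0 : ℝ) 1, t ^ (d - 2) * exp (-t)) := by
    intro d hd
    rw [hIoi d hd, integral_pow_mul_exp_neg_Ioi_one]
  have hbound : ∀ d : ℕ, 2 ≤ d →
      |p d - 1 / ((d : ℝ) * ((d : ℝ) - 1))| ≤ 1 / (d.factorial : ℝ) := fun d hd =>
    abs_sub_one_div_le_of_eq_factorial_sub hd (hIoo d hd)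
      (abs_integral_pow_mul_exp_neg_Ioo_le_one _)
  exact ⟨hIoi, hIoo, hbound, tendsto_mul_of_abs_sub_one_div_le hbound⟩
end

section
/- Under Assumption A, for every r ≥ 1 and every r-tuple (z_1, …, z_r) with 0 ≤ z_s ≤ 1 for all s, lim_{n→∞} E[ Π_{s=1}^r z_s^{D_{n,s}(θ*_n)} ] = E[ exp( − Σ_{t=1}^r (1 − z_{α_r(t)}) (Π_{s=t+1}^r z_{α_r(s)}) λ(ξ_{r|t}) ) ], where ξ_{r|1} ≤ … ≤ ξ_{r|r} are the order statistics of ξ_1, …, ξ_r and α_r is the (random) permutation of {1,…,r} with ξ_{r|t} = ξ_{α_r(t)} for each t (ties broken lexicographically); the empty product Π_{s=r+1}^r is 1. -/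
/-!
Condition on the weights of the first `r` nodes. Each later node `ℓ` multiplies
`∏ s, z_s ^ deg s` by `∏ s, z_s ^ 1{θ < ξ_s + ξ_ℓ}`, and these factors are conditionally i.i.d.,
so the generating function is `E[(∏ s, z_s ^ deg_r s) · φ_n ^ (n - r)]` with `φ_n` the
conditional mean of one factor. Along the order statistics the `s` with `θ < ξ_s + y` form an
upper set, so the product telescopes and
`1 - φ_n = ∑_t (1 - z_{α(t)}) (∏_{s > t} z_{α(s)}) (1 - F(θ - ξ_{r|t}))`.
By Assumption A, `n (1 - φ_n)` converges to the exponent of the limit, so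
`φ_n ^ (n - r) → exp (-…)`; as `θ*_n → ∞` the first `r` nodes eventually share no edge, and
dominated convergence concludes.
-/

open MeasureTheory ProbabilityTheory Filter Real
open scoped Topology ENNReal

open Finset

theorem Finset.sum_one_sub_mul_prod_filter_lt {ι R : Type*} [LinearOrder ι] [CommRing R]
    (S : Finset ι) (w : ι → R) :
    ∑ t ∈ S, (1 - w t) * ∏ s ∈ S with t < s, w s = 1 - ∏ s ∈ S, w s := by
  induction S using Finset.induction_on_min with
  | empty => simp
  | insert a S ha ih =>
    have haS : a ∉ S := fun h => lt_irrefl a (ha a h)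
    have hlt : ∀ t ∈ S, {s ∈ insert a S | t < s} = {s ∈ S | t < s} := fun t ht => by
      rw [filter_insert, if_neg (not_lt.2 (ha t ht).le)]
    rw [sum_insert haS, prod_insert haS, sum_congr rfl fun t ht => by rw [hlt t ht], ih,
      filter_insert, if_neg (lt_irrefl a), filter_true_of_mem ha]
    ring

theorem Finset.prod_ite_one_eq_one_sub_sum_of_monotone {ι R : Type*} [Fintype ι] [LinearOrder ι]
    [CommRing R] (w : ι → R) {c : ι → Prop} [DecidablePred c] (hc : Monotone c) :
    ∏ t, (if c t then w t else 1)
      = 1 - ∑ t, if c t then (1 - w t) * ∏ s with t < s, w s else 0 := by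
  rw [← prod_filter, ← sum_filter, ← sub_sub_cancel 1 (∏ t with c t, w t),
    ← sum_one_sub_mul_prod_filter_lt]
  congr 1
  refine sum_congr rfl fun t ht => ?_
  congr 1
  refine prod_congr ?_ fun _ _ => rfl
  ext s
  simp only [mem_filter, mem_univ, true_and, and_iff_right_iff_imp]
  exact fun hts => hc hts.le (mem_filter.1 ht).2

theorem tendsto_one_sub_pow_sub_of_tendsto_mul {a : ℕ → ℝ} {S : ℝ} (r : ℕ)
    (h : Tendsto (fun n : ℕ => n * a n) atTop (𝓝 S)) :
    Tendsto (fun n => (1 - a n) ^ (n - r)) atTop (𝓝 (exp (-S))) := by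
  have ha : Tendsto (fun n => 1 - a n) atTop (𝓝 1) := by
    simpa using tendsto_const_nhds.sub (tendsto_zero_of_tendsto_mul_atTop h)
  have hpow : Tendsto (fun n => (1 - a n) ^ n) atTop (𝓝 (exp (-S))) := by
    simpa [sub_eq_add_neg] using Real.tendsto_one_add_pow_exp_of_tendsto (by simpa using h.neg)
  have hinv : Tendsto (fun n => ((1 - a n) ^ r)⁻¹) atTop (𝓝 1) := by
    simpa using (ha.pow r).inv₀ (by simp)
  have hquot := hpow.mul hinv
  rw [mul_one] at hquot
  refine hquot.congr' ?_
  filter_upwards [eventually_ge_atTop r, ha.eventually_ne one_ne_zero] with n hn hne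
  rw [pow_sub₀ _ hne hn]

theorem ProbabilityTheory.IndepFun.integral_comp_eq_integral_integral {Ω β γ : Type*}
    [MeasurableSpace Ω] [MeasurableSpace β] [MeasurableSpace γ] {P : Measure Ω} [IsFiniteMeasure P]
    {X : Ω → β} {Y : Ω → γ} (hXY : IndepFun X Y P) (hX : Measurable X) (hY : Measurable Y)
    {H : β × γ → ℝ} (hH : StronglyMeasurable H) (hint : Integrable H ((P.map X).prod (P.map Y))) :
    ∫ ω, H (X ω, Y ω) ∂P = ∫ ω, ∫ y, H (X ω, y) ∂(P.map Y) ∂P := by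
  calc ∫ ω, H (X ω, Y ω) ∂P = ∫ p, H p ∂(P.map fun ω => (X ω, Y ω)) :=
        (integral_map (hX.prodMk hY).aemeasurable hH.aestronglyMeasurable).symm
    _ = ∫ x, ∫ y, H (x, y) ∂(P.map Y) ∂(P.map X) := by
        rw [(indepFun_iff_map_prod_eq_prod_map_map hX.aemeasurable hY.aemeasurable).1 hXY,
          integral_prod H hint]
    _ = ∫ ω, ∫ y, H (X ω, y) ∂(P.map Y) ∂P :=
        integral_map hX.aemeasurable hH.integral_prod_right'.aestronglyMeasurable

theorem ProbabilityTheory.iIndepFun.indepFun_finPrefix {Ω β : Type*} [MeasurableSpace Ω]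
    [MeasurableSpace β] {P : Measure Ω} {ξ : ℕ → Ω → β} (hindep : iIndepFun ξ P)
    (hmeas : ∀ i, Measurable (ξ i)) (k : ℕ) :
    IndepFun (fun ω (i : Fin k) => ξ i ω) (ξ k) P := by
  have hrestrict : Measurable fun (v : Finset.range k → β) (i : Fin k) => v ⟨i, by simp⟩ := by
    fun_prop
  have heval : Measurable fun (v : ({k} : Finset ℕ) → β) => v ⟨k, by simp⟩ := by fun_prop
  exact (hindep.indepFun_finset (Finset.range k) {k} (by simp) hmeas).comp hrestrict heval

theorem measureReal_map_Ioi {Ω : Type*} [MeasurableSpace Ω] {P : Measure Ω}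
    [IsProbabilityMeasure P] {X : Ω → ℝ} (hX : Measurable X) (x : ℝ) :
    (P.map X).real (Set.Ioi x) = 1 - (P {ω | X ω ≤ x}).toReal := by
  have := Measure.isProbabilityMeasure_map (μ := P) hX.aemeasurable
  rw [← Set.compl_Iic, probReal_compl_eq_one_sub measurableSet_Iic,
    map_measureReal_apply hX measurableSet_Iic]
  rfl

theorem ProbabilityTheory.iIndepFun.integral_mul_prod_eq_integral_mul_pow {Ω : Type*}
    [MeasurableSpace Ω] {P : Measure Ω} [IsProbabilityMeasure P] {ξ : ℕ → Ω → ℝ}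
    (hindep : iIndepFun ξ P) (hmeas : ∀ i, Measurable (ξ i)) {μ : Measure ℝ}
    (hlaw : ∀ i, P.map (ξ i) = μ) {r : ℕ} {g : (Fin r → ℝ) → ℝ → ℝ}
    (hg : Measurable (Function.uncurry g)) {Cg : ℝ} (hgC : ∀ u y, |g u y| ≤ Cg) (m : ℕ)
    {h : (Fin r → ℝ) → ℝ} (hh : Measurable h) {C : ℝ} (hhC : ∀ u, |h u| ≤ C) :
    ∫ ω, h (fun s => ξ s ω) * ∏ ℓ : Fin m, g (fun s => ξ s ω) (ξ (r + ℓ) ω) ∂P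
      = ∫ ω, h (fun s => ξ s ω) * (∫ y, g (fun s => ξ s ω) y ∂μ) ^ m ∂P := by
  have : IsProbabilityMeasure μ := hlaw 0 ▸ Measure.isProbabilityMeasure_map (hmeas 0).aemeasurable
  induction m generalizing h C with
  | zero => simp
  | succ m ih =>
    have hφ : Measurable fun u => ∫ y, g u y ∂μ :=
      hg.stronglyMeasurable.integral_prod_right'.measurable
    have hφC : ∀ u, |∫ y, g u y ∂μ| ≤ Cg := fun u => by
      simpa using norm_integral_le_of_norm_le_const (μ := μ) (f := g u)
        (ae_of_all _ fun y => (Real.norm_eq_abs _).trans_le (hgC u y))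
    have hC : 0 ≤ C := (abs_nonneg _).trans (hhC 0)
    let res : (Fin (r + m) → ℝ) → Fin r → ℝ := fun v s => v (Fin.castLE (by omega) s)
    let H : (Fin (r + m) → ℝ) × ℝ → ℝ := fun p =>
      h (res p.1) * (∏ ℓ : Fin m, g (res p.1) (p.1 (Fin.natAdd r ℓ))) * g (res p.1) p.2
    have hH : Measurable H := by
      have hres : Measurable fun p : (Fin (r + m) → ℝ) × ℝ => res p.1 := by fun_prop
      have hgres : ∀ k : (Fin (r + m) → ℝ) × ℝ → ℝ, Measurable k →
          Measurable fun p => g (res p.1) (k p) := fun k hk => hg.comp (hres.prodMk hk)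
      exact ((hh.comp hres).mul (Finset.measurable_prod _ fun ℓ _ => hgres _ (by fun_prop))).mul
        (hgres _ measurable_snd)
    have hHC : ∀ p, ‖H p‖ ≤ C * Cg ^ m * Cg := fun p => by
      have hCg : 0 ≤ Cg := (abs_nonneg _).trans (hgC 0 0)
      have hprod : |∏ ℓ : Fin m, g (res p.1) (p.1 (Fin.natAdd r ℓ))| ≤ Cg ^ m := by
        rw [Finset.abs_prod]
        simpa using Finset.prod_le_prod (s := Finset.univ) (fun _ _ => abs_nonneg _)
          fun ℓ _ => hgC (res p.1) (p.1 (Fin.natAdd r ℓ))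
      simp only [H, Real.norm_eq_abs, abs_mul]
      gcongr
      · exact hhC _
      · exact hgC _ _
    have hstep := (hindep.indepFun_finPrefix hmeas (r + m)).integral_comp_eq_integral_integral
      (measurable_pi_lambda _ fun i => hmeas i) (hmeas _) hH.stronglyMeasurable
      (.of_bound hH.aestronglyMeasurable _ (ae_of_all _ hHC))
    rw [hlaw] at hstep
    calc _ = ∫ ω, H (fun i : Fin (r + m) => ξ i ω, ξ (r + m) ω) ∂P := by
          simp only [H, res, Fin.prod_univ_castSucc, mul_assoc]; rfl
      _ = ∫ ω, (h (fun s => ξ s ω) * ∫ y, g (fun s => ξ s ω) y ∂μ) *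
            ∏ ℓ : Fin m, g (fun s => ξ s ω) (ξ (r + ℓ) ω) ∂P := by
          rw [hstep]
          refine integral_congr_ae (ae_of_all _ fun ω => ?_)
          simp only [H, res, integral_const_mul, Fin.val_castLE, Fin.val_natAdd]
          ring
      _ = _ := ih (h := fun u => h u * ∫ y, g u y ∂μ) (hh.mul hφ) (C := C * Cg) fun u => by
          rw [abs_mul]; exact mul_le_mul (hhC u) (hφC u) (abs_nonneg _) hC
      _ = _ := by
          refine integral_congr_ae (ae_of_all _ fun ω => ?_)
          simp only [pow_succ]
          ring

/-- The factor by which a node of weight `y` multiplies `∏ s, z s ^ deg s` of the nodes of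
weights `u`. -/
noncomputable def degFactor {r : ℕ} (z : Fin r → ℝ) (θ : ℝ) (u : Fin r → ℝ) (y : ℝ) : ℝ :=
  ∏ s, if θ < u s + y then z s else 1

noncomputable def degProd {r : ℕ} (z : Fin r → ℝ) (θ : ℝ) (u : Fin r → ℝ) : ℝ :=
  ∏ s, z s ^ #{ℓ | ℓ ≠ s ∧ θ < u s + u ℓ}

/-- The conditional mean of `∏ s, z s ^ deg ξ (r + m) s θ` given that the first `r` weights are
`u`, when the other `m` weights are independent with law `μ`. -/
noncomputable def condPgf {r : ℕ} (μ : Measure ℝ) (z : Fin r → ℝ) (θ : ℝ) (m : ℕ)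
    (u : Fin r → ℝ) : ℝ :=
  degProd z θ u * (∫ y, degFactor z θ u y ∂μ) ^ m

section Degree

variable {Ω : Type*} (ξ : ℕ → Ω → ℝ) (θ : ℝ) (ω : Ω)

theorem pow_deg_add {r k : ℕ} (hk : k < r) (m : ℕ) (c : ℝ) :
    c ^ deg ξ (r + m) k θ ω
      = c ^ deg ξ r k θ ω * ∏ ℓ : Fin m, if θ < ξ k ω + ξ (r + ℓ) ω then c else 1 := by
  have hsplit : deg ξ (r + m) k θ ω
      = deg ξ r k θ ω + #{ℓ ∈ range m | θ < ξ k ω + ξ (r + ℓ) ω} := by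
    unfold deg
    rw [range_add, filter_union, card_union_of_disjoint
      (disjoint_filter_filter (disjoint_range_addLeftEmbedding _ _)), filter_map, card_map]
    congr 2
    exact filter_congr fun ℓ _ => and_iff_right (by simp only [addLeftEmbedding_apply]; omega)
  rw [hsplit, pow_add,
    Fin.prod_univ_eq_prod_range (fun ℓ => if θ < ξ k ω + ξ (r + ℓ) ω then c else 1),
    prod_ite, prod_const, prod_const, one_pow, mul_one]

theorem prod_pow_deg_add (r m : ℕ) (z : Fin r → ℝ) :
    ∏ s : Fin r, z s ^ deg ξ (r + m) s θ ω
      = (∏ s : Fin r, z s ^ deg ξ r s θ ω)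
        * ∏ ℓ : Fin m, degFactor z θ (fun s => ξ s ω) (ξ (r + ℓ) ω) := by
  simp only [pow_deg_add ξ θ ω (Fin.is_lt _), prod_mul_distrib, degFactor]
  rw [Finset.prod_comm]

theorem prod_pow_deg_eq_degProd {r : ℕ} (z : Fin r → ℝ) :
    ∏ s : Fin r, z s ^ deg ξ r s θ ω = degProd z θ (fun s => ξ s ω) := by
  refine prod_congr rfl fun s _ => congrArg _ ?_
  rw [deg, card_filter, card_filter, ← Fin.sum_univ_eq_sum_range
    (fun ℓ => if ℓ ≠ s ∧ θ < ξ s ω + ξ ℓ ω then 1 else 0)]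
  simp [Fin.val_inj]

end Degree

section Bounds

variable {r : ℕ} (z : Fin r → ℝ) (θ : ℝ)

theorem measurable_degFactor : Measurable (Function.uncurry (degFactor z θ)) := by
  change Measurable fun p : (Fin r → ℝ) × ℝ => ∏ s, if θ < p.1 s + p.2 then z s else 1
  refine Finset.measurable_prod _ fun s _ => Measurable.ite ?_ measurable_const measurable_const
  exact measurableSet_lt measurable_const (by fun_prop)

theorem measurable_degProd : Measurable (degProd z θ) := by
  unfold degProd
  refine Finset.measurable_prod _ fun s _ => measurable_const.pow ?_
  simp only [card_filter]
  refine Finset.measurable_sum _ fun ℓ _ => Measurable.ite ?_ measurable_const measurable_const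
  exact (MeasurableSet.const _).inter
    (measurableSet_lt measurable_const ((measurable_pi_apply s).add (measurable_pi_apply ℓ)))

theorem measurable_condPgf (μ : Measure ℝ) [SFinite μ] (m : ℕ) : Measurable (condPgf μ z θ m) :=
  (measurable_degProd z θ).mul
    ((measurable_degFactor z θ).stronglyMeasurable.integral_prod_right'.measurable.pow_const m)

variable {z}

theorem abs_degFactor_le_one (hz : ∀ s, |z s| ≤ 1) (u : Fin r → ℝ) (y : ℝ) :
    |degFactor z θ u y| ≤ 1 := by
  rw [degFactor, abs_prod]
  exact prod_le_one (fun _ _ => abs_nonneg _) fun s _ => by split_ifs <;> simp [hz s]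

theorem abs_integral_degFactor_le_one (μ : Measure ℝ) [IsProbabilityMeasure μ]
    (hz : ∀ s, |z s| ≤ 1) (u : Fin r → ℝ) : |∫ y, degFactor z θ u y ∂μ| ≤ 1 := by
  simpa using norm_integral_le_of_norm_le_const
    (ae_of_all μ fun y => (Real.norm_eq_abs _).trans_le (abs_degFactor_le_one θ hz u y))

theorem abs_degProd_le_one (hz : ∀ s, |z s| ≤ 1) (u : Fin r → ℝ) : |degProd z θ u| ≤ 1 := by
  rw [degProd, abs_prod]
  exact prod_le_one (fun _ _ => abs_nonneg _) fun s _ => by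
    rw [abs_pow]; exact pow_le_one₀ (abs_nonneg _) (hz s)

theorem abs_condPgf_le_one (μ : Measure ℝ) [IsProbabilityMeasure μ] (hz : ∀ s, |z s| ≤ 1)
    (m : ℕ) (u : Fin r → ℝ) : |condPgf μ z θ m u| ≤ 1 := by
  rw [condPgf, abs_mul, abs_pow]
  exact mul_le_one₀ (abs_degProd_le_one θ hz u) (by positivity)
    (pow_le_one₀ (abs_nonneg _) (abs_integral_degFactor_le_one θ μ hz u))

theorem degProd_eq_one_of_forall_le {u : Fin r → ℝ} (hu : ∀ s ℓ, u s + u ℓ ≤ θ) :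
    degProd z θ u = 1 := by
  refine prod_eq_one fun s _ => ?_
  rw [card_eq_zero.2 (filter_eq_empty_iff.2 fun ℓ _ h => (hu s ℓ).not_gt h.2), pow_zero]

end Bounds

theorem integral_degFactor {r : ℕ} (μ : Measure ℝ) [IsProbabilityMeasure μ] (z : Fin r → ℝ)
    (θ : ℝ) (u : Fin r → ℝ) :
    ∫ y, degFactor z θ u y ∂μ
      = 1 - ∑ t, (1 - z (Tuple.sort u t)) * (∏ s with t < s, z (Tuple.sort u s))
          * μ.real (Set.Ioi (θ - u (Tuple.sort u t))) := by
  set σ := Tuple.sort u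
  have hpt : ∀ y, degFactor z θ u y = 1 - ∑ t, (Set.Ioi (θ - u (σ t))).indicator
      (fun _ => (1 - z (σ t)) * ∏ s with t < s, z (σ s)) y := fun y => by
    rw [degFactor, ← Equiv.prod_comp σ, prod_ite_one_eq_one_sub_sum_of_monotone
      (c := fun t => θ < u (σ t) + y) _
      fun s t hst h => h.trans_le (by gcongr; exact Tuple.monotone_sort u hst)]
    simp only [Set.indicator_apply, Set.mem_Ioi, sub_lt_iff_lt_add']
  have hint : ∀ t, Integrable ((Set.Ioi (θ - u (σ t))).indicator
      (fun _ => (1 - z (σ t)) * ∏ s with t < s, z (σ s))) μ := fun t =>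
    (integrable_const _).indicator measurableSet_Ioi
  simp_rw [hpt]
  rw [integral_sub (integrable_const 1) (integrable_finsetSum _ fun t _ => hint t),
    integral_finsetSum _ fun t _ => hint t]
  simp [integral_indicator_const _ measurableSet_Ioi, mul_comm]

theorem tendsto_integral_degFactor_pow {r : ℕ} (μ : Measure ℝ) [IsProbabilityMeasure μ]
    (z : Fin r → ℝ) {θ : ℕ → ℝ} {u : Fin r → ℝ} {lam : ℝ → ℝ}
    (hlim : ∀ s, Tendsto (fun n : ℕ => n * μ.real (Set.Ioi (θ n - u s))) atTop (𝓝 (lam (u s))))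
    (k : ℕ) :
    Tendsto (fun n => (∫ y, degFactor z (θ n) u y ∂μ) ^ (n - k)) atTop
      (𝓝 (exp (-∑ t, (1 - z (Tuple.sort u t)) * (∏ s with t < s, z (Tuple.sort u s))
          * lam (u (Tuple.sort u t))))) := by
  simp_rw [integral_degFactor]
  refine tendsto_one_sub_pow_sub_of_tendsto_mul k ?_
  simp_rw [mul_sum]
  refine tendsto_finsetSum _ fun t _ => ?_
  simpa only [mul_left_comm] using (hlim (Tuple.sort u t)).const_mul
    ((1 - z (Tuple.sort u t)) * ∏ s with t < s, z (Tuple.sort u s))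

theorem tendsto_condPgf {r : ℕ} (μ : Measure ℝ) [IsProbabilityMeasure μ] (z : Fin r → ℝ)
    {θ : ℕ → ℝ} (hθ : Tendsto θ atTop atTop) {u : Fin r → ℝ} {lam : ℝ → ℝ}
    (hlim : ∀ s, Tendsto (fun n : ℕ => n * μ.real (Set.Ioi (θ n - u s))) atTop (𝓝 (lam (u s))))
    (k : ℕ) :
    Tendsto (fun n => condPgf μ z (θ n) (n - k) u) atTop
      (𝓝 (exp (-∑ t, (1 - z (Tuple.sort u t)) * (∏ s with t < s, z (Tuple.sort u s))
          * lam (u (Tuple.sort u t))))) := by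
  have hpre : ∀ᶠ n in atTop, degProd z (θ n) u = 1 := by
    filter_upwards [eventually_all.2 fun s => eventually_all.2 fun ℓ =>
      hθ.eventually_ge_atTop (u s + u ℓ)] with n hn
    exact degProd_eq_one_of_forall_le _ hn
  refine (tendsto_integral_degFactor_pow μ z hlim k).congr' ?_
  filter_upwards [hpre] with n hn
  rw [condPgf, hn, one_mul]

theorem ProbabilityTheory.iIndepFun.integral_prod_pow_deg_eq {Ω : Type*} [MeasurableSpace Ω]
    {P : Measure Ω} [IsProbabilityMeasure P] {ξ : ℕ → Ω → ℝ} (hindep : iIndepFun ξ P)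
    (hmeas : ∀ i, Measurable (ξ i)) {μ : Measure ℝ} (hlaw : ∀ i, P.map (ξ i) = μ) {r : ℕ}
    {z : Fin r → ℝ} (hz : ∀ s, |z s| ≤ 1) (θ : ℝ) (m : ℕ) :
    ∫ ω, ∏ s : Fin r, z s ^ deg ξ (r + m) s θ ω ∂P
      = ∫ ω, condPgf μ z θ m (fun s => ξ s ω) ∂P := by
  simp_rw [prod_pow_deg_add, prod_pow_deg_eq_degProd]
  exact hindep.integral_mul_prod_eq_integral_mul_pow hmeas hlaw (measurable_degFactor z θ)
    (abs_degFactor_le_one θ hz) m (measurable_degProd z θ) (abs_degProd_le_one θ hz)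

theorem stmt8_general
    {Ω : Type*} [MeasurableSpace Ω] (P : Measure Ω) [IsProbabilityMeasure P]
    (ξ : ℕ → Ω → ℝ) (hmeas : ∀ i, Measurable (ξ i))
    (hindep : iIndepFun ξ P)
    (hident : ∀ i, IdentDistrib (ξ i) (ξ 0) P P)
    (hξnn : ∀ i ω, 0 ≤ ξ i ω)
    (F : ℝ → ℝ) (hF : ∀ x, F x = (P {ω | ξ 0 ω ≤ x}).toReal)
    -- Assumption A
    (θstar : ℕ → ℝ)
    (hθtop : Tendsto θstar atTop atTop)
    (lam : ℝ → ℝ)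
    (hA : ∀ x, 0 ≤ x →
      Tendsto (fun n : ℕ => (n : ℝ) * (1 - F (θstar n - x))) atTop (𝓝 (lam x))) :
    ∀ r : ℕ, 1 ≤ r → ∀ z : Fin r → ℝ, (∀ s, 0 ≤ z s ∧ z s ≤ 1) →
      Tendsto
        (fun n : ℕ => ∫ ω, ∏ s : Fin r, z s ^ deg ξ n (s : ℕ) (θstar n) ω ∂P)
        atTop
        (𝓝 (∫ ω,
          Real.exp (-(∑ t : Fin r,
            (1 - z (Tuple.sort (fun s : Fin r => ξ (s : ℕ) ω) t)) *
            (∏ s ∈ Finset.univ.filter fun s : Fin r => t < s,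
              z (Tuple.sort (fun s : Fin r => ξ (s : ℕ) ω) s)) *
            lam (ξ ((Tuple.sort (fun s : Fin r => ξ (s : ℕ) ω) t : Fin r) : ℕ) ω))) ∂P)) := by
  intro r _ z hz
  have := Measure.isProbabilityMeasure_map (μ := P) (hmeas 0).aemeasurable
  have hz1 : ∀ s, |z s| ≤ 1 := fun s => abs_le.2 ⟨by linarith [(hz s).1], (hz s).2⟩
  have hvec : Measurable fun ω (s : Fin r) => ξ s ω := measurable_pi_lambda _ fun s => hmeas s
  let μ := P.map (ξ 0)
  refine Tendsto.congr' ?_ (tendsto_integral_of_dominated_convergence (fun _ => 1)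
    (fun n => ((measurable_condPgf z (θstar n) μ (n - r)).comp hvec).aestronglyMeasurable)
    (integrable_const 1) (fun n => ae_of_all _ fun ω => abs_condPgf_le_one _ μ hz1 _ _)
    (ae_of_all _ fun ω => tendsto_condPgf μ z hθtop (fun s => ?_) r))
  · filter_upwards [eventually_ge_atTop r] with n hn
    obtain ⟨m, rfl⟩ := Nat.exists_eq_add_of_le hn
    rw [Nat.add_sub_cancel_left]
    exact (hindep.integral_prod_pow_deg_eq hmeas (fun i => (hident i).map_eq) hz1 _ m).symm
  · simpa only [μ, measureReal_map_Ioi (hmeas 0), ← hF] using hA _ (hξnn _ ω)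

/-- Under Assumption A, the joint probability generating
function of the degrees of nodes `1, …, r` converges:
for `0 ≤ z_s ≤ 1`,
`E[∏_s z_s^{D_{n,s}(θ*_n)}] →
 E[exp(−∑_t (1 − z_{α_r(t)}) (∏_{s>t} z_{α_r(s)}) λ(ξ_{r|t}))]`,
where `α_r = Tuple.sort (ξ_1, …, ξ_r)` is the sorting permutation
(ties broken lexicographically) and `ξ_{r|t} = ξ_{α_r(t)}` are the order
statistics. -/
theorem stmt8
    {Ω : Type*} [MeasurableSpace Ω] (P : Measure Ω) [IsProbabilityMeasure P]
    (ξ : ℕ → Ω → ℝ) (hmeas : ∀ i, Measurable (ξ i))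
    (hindep : iIndepFun ξ P)
    (hident : ∀ i, IdentDistrib (ξ i) (ξ 0) P P)
    (hξnn : ∀ i ω, 0 ≤ ξ i ω)
    (F : ℝ → ℝ) (hF : ∀ x, F x = (P {ω | ξ 0 ω ≤ x}).toReal)
    (hFcont : Continuous F) (hF0 : ∀ x ≤ (0 : ℝ), F x = 0)
    -- Assumption A
    (θstar : ℕ → ℝ) (hθpos : ∀ n, 0 < θstar n)
    (hθtop : Tendsto θstar atTop atTop)
    (lam : ℝ → ℝ) (hlamnn : ∀ x, 0 ≤ x → 0 ≤ lam x)
    (hlamne : ∃ x, 0 ≤ x ∧ lam x ≠ 0)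
    (hA : ∀ x, 0 ≤ x →
      Tendsto (fun n : ℕ => (n : ℝ) * (1 - F (θstar n - x))) atTop (𝓝 (lam x))) :
    ∀ r : ℕ, 1 ≤ r → ∀ z : Fin r → ℝ, (∀ s, 0 ≤ z s ∧ z s ≤ 1) →
      Tendsto
        (fun n : ℕ => ∫ ω, ∏ s : Fin r, z s ^ deg ξ n (s : ℕ) (θstar n) ω ∂P)
        atTop
        (𝓝 (∫ ω,
          Real.exp (-(∑ t : Fin r,
            (1 - z (Tuple.sort (fun s : Fin r => ξ (s : ℕ) ω) t)) *
            (∏ s ∈ Finset.univ.filter fun s : Fin r => t < s,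
              z (Tuple.sort (fun s : Fin r => ξ (s : ℕ) ω) s)) *
            lam (ξ ((Tuple.sort (fun s : Fin r => ξ (s : ℕ) ω) t : Fin r) : ℕ) ω))) ∂P)) :=
  stmt8_general P ξ hmeas hindep hident hξnn F hF θstar hθtop lam hA
end

section
/- Fix r ≥ 1, θ > 0, z_1, …, z_r ∈ ℝ and x_1, …, x_r ∈ ℝ₊ with x_s ≤ θ for every s. Let x_{(r|1)} ≤ … ≤ x_{(r|r)} be the values x_1, …, x_r arranged in increasing order, let a_r be a permutation of {1,…,r} with x_{(r|s)} = x_{a_r(s)} for all s, and adopt the conventions F(θ − x_{(r|0)}) = 1 and F(θ − x_{(r|r+1)}) = 0. Then F_r(θ; z_1,…,z_r; x_1,…,x_r) = Σ_{t=0}^{r} (Π_{s=t+1}^r z_{a_r(s)}) · (F(θ − x_{(r|t)}) − F(θ − x_{(r|t+1)})), where the empty product is 1. -/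
open MeasureTheory ProbabilityTheory Filter Real
open scoped Topology ENNReal

open scoped Finset

/-- `F_r(θ; z_1,…,z_r; x_1,…,x_r) = E[∏_{s=1}^r (1 − (1 − z_s) 1{x_s + ξ > θ})]`,
where `ξ` is a random variable on `(Ω, P)`. -/
noncomputable def Fr {Ω : Type*} [MeasurableSpace Ω] (P : Measure Ω) (ξ : Ω → ℝ)
    (r : ℕ) (θ : ℝ) (z x : Fin r → ℝ) : ℝ :=
  ∫ ω, ∏ s : Fin r, (1 - (1 - z s) * (if θ < x s + ξ ω then 1 else 0)) ∂P

/-!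
Sorting makes `y = x ∘ a` monotone, so for each value `v` of `ξ` the indices `s` with
`θ < y s + v` form the final segment `{s | M ≤ s}`, where `M = #{u | y u ≤ θ - v}`. The
integrand is therefore `∏_{s ≥ M} z_{a(s)}`, a function of the `ℕ`-valued variable `M(ξ)`,
whose law is read off from `P(M(ξ) ≤ t) = P(θ - y t < ξ) = 1 - F(θ - x_{(r|t+1)})`.
-/

theorem Monotone.card_filter_le_le_iff_lt {α : Type*} [LinearOrder α] {r : ℕ}
    {y : Fin r → α} (hy : Monotone y) (c : α) (s : Fin r) :
    #{u | y u ≤ c} ≤ (s : ℕ) ↔ c < y s := by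
  constructor
  · intro hcard
    by_contra! hs
    have hsub : Finset.Iic s ⊆ ({u | y u ≤ c} : Finset (Fin r)) := fun u hu =>
      Finset.mem_filter.2 ⟨Finset.mem_univ u, (hy (Finset.mem_Iic.1 hu)).trans hs⟩
    have := Finset.card_le_card hsub
    rw [Fin.card_Iic] at this
    omega
  · intro hs
    have hsub : ({u | y u ≤ c} : Finset (Fin r)) ⊆ Finset.Iio s := fun u hu => by
      rw [Finset.mem_Iio]
      by_contra! hsu
      exact (hs.trans_le (hy hsu)).not_ge (Finset.mem_filter.1 hu).2
    simpa using Finset.card_le_card hsub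

theorem integral_comp_eq_sum_measureReal_lt {Ω : Type*} [MeasurableSpace Ω] {P : Measure Ω}
    [IsFiniteMeasure P] {M : Ω → ℕ} (hM : Measurable M) {n : ℕ} (hMn : ∀ ω, M ω < n)
    (f : ℕ → ℝ) :
    ∫ ω, f (M ω) ∂P
      = ∑ t ∈ Finset.range n, f t * (P.real {ω | M ω < t + 1} - P.real {ω | M ω < t}) := by
  have hlevel : ∀ t, MeasurableSet {ω | M ω = t} := fun t => hM (measurableSet_singleton t)
  have hpt : ∀ ω,
      f (M ω) = ∑ t ∈ Finset.range n, {ω | M ω = t}.indicator (fun _ => f t) ω := by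
    intro ω
    simp only [Set.indicator_apply, Set.mem_ofPred_eq]
    rw [Finset.sum_ite_eq, if_pos (Finset.mem_range.2 (hMn ω))]
  have hdiff : ∀ t, {ω | M ω = t} = {ω | M ω < t + 1} \ {ω | M ω < t} := by
    intro t; ext ω; simp only [Set.mem_ofPred_eq, Set.mem_sdiff]; omega
  have hsub : ∀ t, {ω | M ω < t} ⊆ {ω | M ω < t + 1} := fun t ω h => Nat.lt_succ_of_lt h
  simp_rw [hpt]
  rw [integral_finsetSum _ fun t _ => (integrable_const (f t)).indicator (hlevel t)]
  refine Finset.sum_congr rfl fun t _ => ?_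
  rw [integral_indicator_const (f t) (hlevel t), smul_eq_mul, mul_comm, hdiff,
    measureReal_sdiff (hsub t) (hM measurableSet_Iio)]

theorem monotone_card_filter_le {ι α : Type*} [Fintype ι] [LinearOrder α] (y : ι → α) :
    Monotone fun c => #{u | y u ≤ c} := fun c _ hcd =>
  Finset.card_le_card <| Finset.monotone_filter_right Finset.univ fun u _ (h : y u ≤ c) =>
    h.trans hcd

theorem prod_one_sub_mul_ite_lt_eq_prod_sort {R α : Type*} [CommRing R] [LinearOrder α] {r : ℕ}
    (x : Fin r → α) (z : Fin r → R) (c : α) :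
    ∏ s, (1 - (1 - z s) * if c < x s then (1 : R) else 0)
      = ∏ s ∈ Finset.univ.filter fun s : Fin r => #{u | x (Tuple.sort x u) ≤ c} ≤ (s : ℕ),
          z (Tuple.sort x s) := by
  rw [← Equiv.prod_comp (Tuple.sort x), Finset.prod_filter]
  refine Finset.prod_congr rfl fun s _ => ?_
  have hcut : c < x (Tuple.sort x s) ↔ #{u | x (Tuple.sort x u) ≤ c} ≤ (s : ℕ) :=
    ((Tuple.monotone_sort x).card_filter_le_le_iff_lt c s).symm
  simp only [hcut]
  split_ifs <;> ring

theorem measureReal_card_filter_le_le {Ω : Type*} [MeasurableSpace Ω] (P : Measure Ω)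
    [IsProbabilityMeasure P] {ξ : Ω → ℝ} (hξ : Measurable ξ) {r : ℕ} {y : Fin r → ℝ}
    (hy : Monotone y) (c : ℝ) (t : Fin r) :
    P.real {ω | #{u | y u ≤ c - ξ ω} ≤ (t : ℕ)} = 1 - P.real {ω | ξ ω ≤ c - y t} := by
  have hset : {ω | #{u | y u ≤ c - ξ ω} ≤ (t : ℕ)} = {ω | ξ ω ≤ c - y t}ᶜ := by
    ext ω
    simp only [Set.mem_ofPred_eq, Set.mem_compl_iff, not_le]
    exact (hy.card_filter_le_le_iff_lt _ t).trans sub_lt_comm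
  rw [hset, probReal_compl_eq_one_sub (measurableSet_le hξ measurable_const)]

theorem stmt11_general
    {Ω : Type*} [MeasurableSpace Ω] (P : Measure Ω) [IsProbabilityMeasure P]
    (ξ : Ω → ℝ) (hmeas : Measurable ξ)
    (F : ℝ → ℝ) (hF : ∀ x, F x = (P {ω | ξ ω ≤ x}).toReal)
    (r : ℕ) (θ : ℝ)
    (z x : Fin r → ℝ)
    -- `g t = F(θ − x_{(r|t)})` for `t = 0, 1, …, r+1`, with the conventions
    -- `g 0 = 1` and `g (r+1) = 0`.
    (g : ℕ → ℝ) (hg0 : g 0 = 1)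
    (hg : ∀ t : Fin r, g ((t : ℕ) + 1) = F (θ - x (Tuple.sort x t)))
    (hgr : g (r + 1) = 0) :
    Fr P ξ r θ z x
      = ∑ t ∈ Finset.range (r + 1),
          (∏ s ∈ Finset.univ.filter fun s : Fin r => t ≤ (s : ℕ),
            z (Tuple.sort x s)) * (g t - g (t + 1)) := by
  set a := Tuple.sort x
  set M : Ω → ℕ := fun ω => #{u | x (a u) ≤ θ - ξ ω}
  have hM : Measurable M :=
    (monotone_card_filter_le (x ∘ a)).measurable.comp (measurable_const.sub hmeas)
  have hMr : ∀ ω, M ω < r + 1 := fun ω =>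
    Nat.lt_succ_of_le ((Finset.card_le_univ _).trans_eq (Fintype.card_fin r))
  have hlt : ∀ t ≤ r + 1, P.real {ω | M ω < t} = 1 - g t := by
    rintro (_ | t) ht
    · simp [hg0]
    rcases (Nat.succ_le_succ_iff.1 ht).lt_or_eq with ht | rfl
    · simp only [M, Nat.lt_succ_iff]
      refine (measureReal_card_filter_le_le P hmeas (Tuple.monotone_sort x) θ ⟨t, ht⟩).trans ?_
      rw [show g (t + 1) = _ from hg ⟨t, ht⟩, hF, measureReal_def]
      rfl
    · simp [hMr, hgr]
  have hintegrand : ∀ ω, (∏ s, (1 - (1 - z s) * if θ < x s + ξ ω then 1 else 0))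
      = ∏ s ∈ Finset.univ.filter fun s : Fin r => M ω ≤ (s : ℕ), z (a s) := fun ω => by
    simp only [← sub_lt_iff_lt_add]
    exact prod_one_sub_mul_ite_lt_eq_prod_sort x z (θ - ξ ω)
  rw [Fr, integral_congr_ae (Eventually.of_forall hintegrand)]
  refine (integral_comp_eq_sum_measureReal_lt hM hMr
    fun t => ∏ s ∈ Finset.univ.filter fun s : Fin r => t ≤ (s : ℕ), z (a s)).trans
    (Finset.sum_congr rfl fun t ht => ?_)
  have ht : t < r + 1 := Finset.mem_range.1 ht
  rw [hlt (t + 1) ht, hlt t ht.le]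
  ring

/-- If `x_s ≤ θ` for every `s` (the index set
`S(θ;x)` is empty), then, with `a = Tuple.sort x` the sorting permutation
(`x_{(r|t)} = x_{a(t)}`) and with the conventions `F(θ − x_{(r|0)}) = 1` and
`F(θ − x_{(r|r+1)}) = 0` (encoded in the function `g`),
`F_r(θ; z; x) = Σ_{t=0}^r (∏_{s=t+1}^r z_{a(s)}) (F(θ − x_{(r|t)}) − F(θ − x_{(r|t+1)}))`. -/
theorem stmt11
    {Ω : Type*} [MeasurableSpace Ω] (P : Measure Ω) [IsProbabilityMeasure P]
    (ξ : Ω → ℝ) (hmeas : Measurable ξ) (hξnn : ∀ ω, 0 ≤ ξ ω)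
    (F : ℝ → ℝ) (hF : ∀ x, F x = (P {ω | ξ ω ≤ x}).toReal)
    (hFcont : Continuous F) (hF0 : ∀ x ≤ (0 : ℝ), F x = 0)
    (r : ℕ) (hr : 1 ≤ r) (θ : ℝ) (hθ : 0 < θ)
    (z x : Fin r → ℝ) (hx : ∀ s, 0 ≤ x s) (hxθ : ∀ s, x s ≤ θ)
    -- `g t = F(θ − x_{(r|t)})` for `t = 0, 1, …, r+1`, with the conventions
    -- `g 0 = 1` and `g (r+1) = 0`.
    (g : ℕ → ℝ) (hg0 : g 0 = 1)
    (hg : ∀ t : Fin r, g ((t : ℕ) + 1) = F (θ - x (Tuple.sort x t)))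
    (hgr : g (r + 1) = 0) :
    Fr P ξ r θ z x
      = ∑ t ∈ Finset.range (r + 1),
          (∏ s ∈ Finset.univ.filter fun s : Fin r => t ≤ (s : ℕ),
            z (Tuple.sort x s)) * (g t - g (t + 1)) :=
  stmt11_general P ξ hmeas F hF r θ z x g hg0 hg hgr
end

section
/- Suppose Assumption A holds. Fix r ≥ 1, x_1, …, x_r ∈ ℝ₊ and z_1, …, z_r ∈ [0,1]. Let x_{(r|1)} ≤ … ≤ x_{(r|r)} be the ordered values and a_r a sorting permutation with x_{(r|s)} = x_{a_r(s)}. Then lim_{n→∞} F_r(θ*_n; z_1,…,z_r; x_1,…,x_r)^{n−r} = exp( − Σ_{t=1}^r λ(x_{(r|t)}) (1 − z_{a_r(t)}) Π_{s=t+1}^r z_{a_r(s)} ), where the empty product is 1. -/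
open MeasureTheory ProbabilityTheory Filter Real
open scoped Topology ENNReal

/-! Once the thresholds are sorted, the events `{θ < x_{a(t)} + ξ}` increase with `t`, so the
product inside `F_r` telescopes: `F_r(θ) = 1 − Σ_t c_t (1 − F(θ − x_{(r|t)}))` with
`c_t = (1 − z_{a(t)}) ∏_{s>t} z_{a(s)}`. Assumption A then gives
`n (1 − F_r(θ*_n)) → Σ_t c_t λ(x_{(r|t)}) =: L`, and `(1 − L/n + o(1/n))^{n−r} → e^{−L}`. -/

namespace Finset

variable {ι R : Type*} [CommRing R] [LinearOrder ι]

theorem prod_eq_one_sub_sum_mul_prod_gt (s : Finset ι) (u : ι → R) :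
    ∏ i ∈ s, u i = 1 - ∑ i ∈ s, (1 - u i) * ∏ j ∈ s with i < j, u j := by
  have h := prod_add_ordered s u (fun i => 1 - u i)
  simp only [add_sub_cancel, prod_const_one, mul_one] at h
  linear_combination -h

theorem prod_one_sub_mul_ite_of_monotone (s : Finset ι) (z : ι → R) {p : ι → Prop}
    [DecidablePred p] (hp : Monotone p) :
    ∏ i ∈ s, (1 - (1 - z i) * if p i then 1 else 0) =
      1 - ∑ i ∈ s, (1 - z i) * (∏ j ∈ s with i < j, z j) * if p i then 1 else 0 := by
  rw [prod_eq_one_sub_sum_mul_prod_gt]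
  refine congrArg _ (sum_congr rfl fun i _ => ?_)
  by_cases hi : p i
  · rw [prod_congr rfl fun j hj => show (1 - (1 - z j) * if p j then (1 : R) else 0) = z j by
      simp [hp (mem_filter.1 hj).2.le hi]]
    simp [hi]
  · simp [hi]

end Finset

theorem integral_ite_lt_add {Ω : Type*} [MeasurableSpace Ω] (P : Measure Ω)
    [IsProbabilityMeasure P] {ξ : Ω → ℝ} (hξ : Measurable ξ) (θ y : ℝ) :
    ∫ ω, (if θ < y + ξ ω then (1 : ℝ) else 0) ∂P = 1 - P.real {ω | ξ ω ≤ θ - y} := by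
  have hset : {ω | ξ ω ≤ θ - y}ᶜ = {ω | θ < y + ξ ω} := by
    ext ω
    simp only [Set.mem_compl_iff, Set.mem_ofPred_eq, not_le]
    constructor <;> intro h <;> linarith
  rw [← probReal_compl_eq_one_sub (measurableSet_le hξ measurable_const), hset,
    ← integral_indicator_one (show MeasurableSet {ω | θ < y + ξ ω} from
      measurableSet_lt measurable_const (measurable_const.add hξ))]
  rfl

theorem Real.tendsto_one_add_pow_sub_exp_of_tendsto {g : ℕ → ℝ} {t : ℝ} (r : ℕ)
    (hg : Tendsto (fun n ↦ n * g n) atTop (𝓝 t)) :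
    Tendsto (fun n ↦ (1 + g n) ^ (n - r)) atTop (𝓝 (exp t)) := by
  have hbase : Tendsto (fun n ↦ 1 + g n) atTop (𝓝 1) := by
    simpa using tendsto_const_nhds.add (tendsto_zero_of_tendsto_mul_atTop hg)
  have hquot := (Real.tendsto_one_add_pow_exp_of_tendsto hg).div (hbase.pow r) (by simp)
  rw [one_pow, div_one] at hquot
  refine hquot.congr' ?_
  filter_upwards [eventually_ge_atTop r, hbase.eventually_ne one_ne_zero] with n hn hne
  exact (pow_sub₀ _ hne hn).symm

theorem Fr_eq_one_sub_sum_sort {Ω : Type*} [MeasurableSpace Ω] (P : Measure Ω)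
    [IsProbabilityMeasure P] {ξ : Ω → ℝ} (hξ : Measurable ξ) {F : ℝ → ℝ}
    (hF : ∀ y, F y = (P {ω | ξ ω ≤ y}).toReal) (r : ℕ) (θ : ℝ) (z x : Fin r → ℝ) :
    Fr P ξ r θ z x = 1 - ∑ t, (1 - z (Tuple.sort x t)) *
      (∏ s ∈ Finset.univ with t < s, z (Tuple.sort x s)) * (1 - F (θ - x (Tuple.sort x t))) := by
  set σ := Tuple.sort x
  have hsorted : ∀ ω, ∏ s, (1 - (1 - z s) * (if θ < x s + ξ ω then 1 else 0)) =
      1 - ∑ t, (1 - z (σ t)) * (∏ s ∈ Finset.univ with t < s, z (σ s)) *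
        (if θ < x (σ t) + ξ ω then 1 else 0) := fun ω => by
    rw [← Equiv.prod_comp σ]
    exact Finset.prod_one_sub_mul_ite_of_monotone _ _
      fun s t hst h => h.trans_le (by gcongr; exact Tuple.monotone_sort x hst)
  have hintegrable :
      ∀ t, Integrable (fun ω => (if θ < x (σ t) + ξ ω then (1 : ℝ) else 0)) P := fun t =>
    (integrable_const (1 : ℝ)).indicator (s := {ω | θ < x (σ t) + ξ ω})
      (measurableSet_lt measurable_const (measurable_const.add hξ))
  rw [Fr, integral_congr_ae (ae_of_all _ hsorted), integral_sub (integrable_const 1)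
    (integrable_finsetSum _ fun t _ => (hintegrable t).const_mul _), integral_finsetSum _
    fun t _ => (hintegrable t).const_mul _]
  simp only [integral_const, measure_univ, ENNReal.toReal_one, smul_eq_mul, mul_one,
    integral_const_mul, integral_ite_lt_add P hξ, hF, measureReal_def]

theorem stmt12_general
    {Ω : Type*} [MeasurableSpace Ω] (P : Measure Ω) [IsProbabilityMeasure P]
    (ξ : Ω → ℝ) (hmeas : Measurable ξ)
    (F : ℝ → ℝ) (hF : ∀ x, F x = (P {ω | ξ ω ≤ x}).toReal)
    -- Assumption A
    (θstar : ℕ → ℝ)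
    (lam : ℝ → ℝ)
    (hA : ∀ x, 0 ≤ x →
      Tendsto (fun n : ℕ => (n : ℝ) * (1 - F (θstar n - x))) atTop (𝓝 (lam x)))
    (r : ℕ)
    (z x : Fin r → ℝ) (hx : ∀ s, 0 ≤ x s) :
    Tendsto (fun n : ℕ => (Fr P ξ r (θstar n) z x) ^ (n - r)) atTop
      (𝓝 (Real.exp (-(∑ t : Fin r,
        lam (x (Tuple.sort x t)) * (1 - z (Tuple.sort x t)) *
          ∏ s ∈ Finset.univ.filter fun s : Fin r => t < s, z (Tuple.sort x s))))) := by
  set σ := Tuple.sort x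
  set c : Fin r → ℝ := fun t => (1 - z (σ t)) * ∏ s ∈ Finset.univ with t < s, z (σ s)
  have hlim : Tendsto (fun n : ℕ => (n : ℝ) * -∑ t, c t * (1 - F (θstar n - x (σ t)))) atTop
      (𝓝 (-∑ t, lam (x (σ t)) * (1 - z (σ t)) * ∏ s ∈ Finset.univ with t < s, z (σ s))) := by
    have hsum := (tendsto_finsetSum Finset.univ fun t _ => (hA _ (hx (σ t))).const_mul (c t)).neg
    convert hsum using 2 with n
    · simp only [mul_neg, Finset.mul_sum]
      exact congrArg _ (Finset.sum_congr rfl fun t _ => by ring)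
    · exact congrArg _ (Finset.sum_congr rfl fun t _ => by ring)
  have hFr : ∀ n, Fr P ξ r (θstar n) z x = 1 + -∑ t, c t * (1 - F (θstar n - x (σ t))) :=
    fun n => by rw [Fr_eq_one_sub_sum_sort P hmeas hF, sub_eq_add_neg]
  simpa only [hFr] using Real.tendsto_one_add_pow_sub_exp_of_tendsto r hlim

/-- Under Assumption A, for fixed `x_1,…,x_r ∈ ℝ₊` and
`z_1,…,z_r ∈ [0,1]`, with `a = Tuple.sort x` the sorting permutation
(`x_{(r|t)} = x_{a(t)}`),
`F_r(θ*_n; z; x)^{n−r} → exp(−Σ_{t=1}^r λ(x_{(r|t)})(1 − z_{a(t)}) ∏_{s=t+1}^r z_{a(s)})`. -/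
theorem stmt12
    {Ω : Type*} [MeasurableSpace Ω] (P : Measure Ω) [IsProbabilityMeasure P]
    (ξ : Ω → ℝ) (hmeas : Measurable ξ) (hξnn : ∀ ω, 0 ≤ ξ ω)
    (F : ℝ → ℝ) (hF : ∀ x, F x = (P {ω | ξ ω ≤ x}).toReal)
    (hFcont : Continuous F) (hF0 : ∀ x ≤ (0 : ℝ), F x = 0)
    -- Assumption A
    (θstar : ℕ → ℝ) (hθpos : ∀ n, 0 < θstar n)
    (hθtop : Tendsto θstar atTop atTop)
    (lam : ℝ → ℝ) (hlamnn : ∀ x, 0 ≤ x → 0 ≤ lam x)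
    (hlamne : ∃ x, 0 ≤ x ∧ lam x ≠ 0)
    (hA : ∀ x, 0 ≤ x →
      Tendsto (fun n : ℕ => (n : ℝ) * (1 - F (θstar n - x))) atTop (𝓝 (lam x)))
    (r : ℕ) (hr : 1 ≤ r)
    (z x : Fin r → ℝ) (hx : ∀ s, 0 ≤ x s) (hz : ∀ s, 0 ≤ z s ∧ z s ≤ 1) :
    Tendsto (fun n : ℕ => (Fr P ξ r (θstar n) z x) ^ (n - r)) atTop
      (𝓝 (Real.exp (-(∑ t : Fin r,
        lam (x (Tuple.sort x t)) * (1 - z (Tuple.sort x t)) *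
          ∏ s ∈ Finset.univ.filter fun s : Fin r => t < s, z (Tuple.sort x s))))) :=
  stmt12_general P ξ hmeas F hF θstar lam hA r z x hx
end

section
/- Under Assumption A, for every d ∈ ℕ there is no constant L(d) ∈ ℝ such that P_n(d;θ*_n) converges in probability to L(d) as n → ∞. -/
open MeasureTheory ProbabilityTheory Filter Real
open scoped Topology ENNReal

/-- Number of nodes of degree `d` in the random threshold graph. -/
noncomputable def Ncount {Ω : Type*} (ξ : ℕ → Ω → ℝ) (n d : ℕ) (θ : ℝ) (ω : Ω) : ℕ :=
  ((Finset.range n).filter fun k => deg ξ n k θ ω = d).card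

/-!
On the event that exactly `j` of the fitnesses `ξ_0, …, ξ_{n-1}` fall into a band `B_n` just
below `θ*_n` and all others are at most `θ*_n - x`, every node with fitness at most `w` is isolated
and every node with fitness in `(v, x]` has degree exactly `j`. Assumption A makes the number of
band nodes asymptotically Poisson with positive mean, so this event has probability bounded away
from zero both for `j = 0` and for `j = max d 1`, while by the strong law the fractions of nodes
with fitness in `(-∞, w] ∪ (v, x]` and in `(v, x]` concentrate at `F w + F x - F v` and
`F x - F v`. Once `F w + 2 (F x - F v) > 1`, the two events force `P_n(d)` to take, with positive
probability, two values too far apart to be close to the same constant. Such `w ≤ v ≤ x` exist: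
take `w = -1`, `v = 0` and `B_n = (θ*_n, ∞)` if `λ 0 > 0`, and otherwise a short interval `[w, v]` on which `λ`
increases but, by uniform continuity, `F` hardly does, with `B_n = (θ*_n - v, θ*_n - w]`.
-/

lemma eventually_le_pow_sub_of_tendsto_mul_one_sub {q : ℕ → ℝ} {Λ : ℝ}
    (hq : Tendsto (fun n : ℕ => n * (1 - q n)) atTop (𝓝 Λ)) (j : ℕ) :
    ∀ᶠ n in atTop, exp (-(|Λ| + 1)) / 2 ≤ q n ^ (n - j) := by
  set c := |Λ| + 1
  have hlim : Tendsto (fun n : ℕ => (1 - c / n) ^ n) atTop (𝓝 (exp (-c))) := by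
    simpa [neg_div, ← sub_eq_add_neg] using tendsto_one_add_div_pow_exp (-c)
  have hn := tendsto_natCast_atTop_atTop (R := ℝ)
  filter_upwards [hq.eventually_le_const (by linarith [le_abs_self Λ] : Λ < c),
    hlim.eventually_const_le (half_lt_self (exp_pos _)), hn.eventually_ge_atTop c,
    hn.eventually_gt_atTop 0] with n hqn hexp hcn hn0
  have hbase0 : 0 ≤ 1 - c / n := sub_nonneg.2 ((div_le_one hn0).2 hcn)
  have hbase1 : 1 - c / n ≤ 1 := sub_le_self _ (by positivity)
  have hbase : 1 - c / n ≤ q n := by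
    rw [sub_le_comm, le_div_iff₀ hn0, mul_comm]
    exact hqn
  calc exp (-c) / 2 ≤ (1 - c / n) ^ n := hexp
    _ ≤ (1 - c / n) ^ (n - j) := pow_le_pow_of_le_one hbase0 hbase1 (Nat.sub_le n j)
    _ ≤ q n ^ (n - j) := pow_le_pow_left₀ hbase0 hbase _

lemma eventually_le_choose_mul_pow {p : ℕ → ℝ} {μ : ℝ} (hμ : 0 < μ)
    (hp : Tendsto (fun n : ℕ => n * p n) atTop (𝓝 μ)) (j : ℕ) :
    ∀ᶠ n in atTop, (μ / 4) ^ j / j.factorial ≤ n.choose j * p n ^ j := by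
  filter_upwards [hp.eventually_const_le (half_lt_self hμ), eventually_ge_atTop (2 * j),
    eventually_gt_atTop 0] with n hpn hjn hn
  have hp0 : 0 ≤ p n := nonneg_of_mul_nonneg_right (by linarith) (by positivity : (0 : ℝ) < n)
  have hhalf : (n : ℝ) / 2 ≤ ((n + 1 - j : ℕ) : ℝ) := by
    have : (2 * j : ℝ) ≤ n := by exact_mod_cast hjn
    rw [Nat.cast_sub (by omega)]
    push_cast
    linarith
  have hbase : μ / 4 ≤ ((n + 1 - j : ℕ) : ℝ) * p n := by nlinarith
  calc (μ / 4) ^ j / j.factorial ≤ (((n + 1 - j : ℕ) : ℝ) * p n) ^ j / j.factorial := by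
        gcongr
    _ = ((n + 1 - j : ℕ) : ℝ) ^ j / j.factorial * p n ^ j := by ring
    _ ≤ n.choose j * p n ^ j := by
        gcongr
        exact_mod_cast Nat.pow_le_choose j n

lemma exists_pos_eventually_le_choose_mul_pow_mul_pow {p q : ℕ → ℝ} {μ Λ : ℝ} (hμ : 0 < μ)
    (hp : Tendsto (fun n : ℕ => n * p n) atTop (𝓝 μ))
    (hq : Tendsto (fun n : ℕ => n * (1 - q n)) atTop (𝓝 Λ)) (j : ℕ) :
    ∃ ε > 0, ∀ᶠ n in atTop, ε ≤ n.choose j * p n ^ j * q n ^ (n - j) := by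
  refine ⟨(μ / 4) ^ j / j.factorial * (exp (-(|Λ| + 1)) / 2), by positivity, ?_⟩
  filter_upwards [eventually_le_choose_mul_pow hμ hp j,
    eventually_le_pow_sub_of_tendsto_mul_one_sub hq j] with n h1 h2
  exact mul_le_mul h1 h2 (by positivity) (le_trans (by positivity) h1)

lemma exists_short_increase_of_lt {f : ℝ → ℝ} {b δ : ℝ} (hb : 0 ≤ b) (hδ : 0 < δ) (h : f 0 < f b) :
    ∃ w v, 0 ≤ w ∧ w ≤ v ∧ v ≤ b ∧ v - w < δ ∧ f w < f v := by
  set N := ⌊b / δ⌋₊ + 1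
  have hN : (0 : ℝ) < N := by positivity
  set a : ℕ → ℝ := fun i => i * (b / N)
  have hmesh : b / N < δ := by
    rw [div_lt_iff₀ hN, ← div_lt_iff₀' hδ]
    exact_mod_cast Nat.lt_floor_add_one (b / δ)
  have htele : ∑ i ∈ Finset.range N, (0 : ℝ) < ∑ i ∈ Finset.range N, (f (a (i + 1)) - f (a i)) := by
    rw [Finset.sum_range_sub (fun i => f (a i)), Finset.sum_const_zero]
    simp only [a, Nat.cast_zero, zero_mul, mul_div_cancel₀ b hN.ne']
    linarith
  obtain ⟨i, hi, hlt⟩ := Finset.exists_lt_of_sum_lt htele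
  have hiN : (i : ℝ) + 1 ≤ N := by exact_mod_cast Finset.mem_range.1 hi
  refine ⟨a i, a (i + 1), by positivity, ?_, ?_, ?_, by linarith⟩
  · simp only [a]; gcongr; linarith
  · calc a (i + 1) ≤ N * (b / N) := by simp only [a]; push_cast; gcongr
      _ = b := mul_div_cancel₀ b hN.ne'
  · simp only [a]; push_cast; linarith

lemma exists_increase_of_continuous {f g : ℝ → ℝ} (hg : Continuous g) {b ε : ℝ} (hb : 0 ≤ b)
    (hε : 0 < ε) (h : f 0 < f b) :
    ∃ w v, 0 ≤ w ∧ w ≤ v ∧ v ≤ b ∧ g v - g w < ε ∧ f w < f v := by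
  obtain ⟨δ, hδ, hgδ⟩ := Metric.uniformContinuousOn_iff.1
    (isCompact_Icc.uniformContinuousOn_of_continuous hg.continuousOn) ε hε
  obtain ⟨w, v, hw, hwv, hvb, hvw, hfwv⟩ := exists_short_increase_of_lt hb hδ h
  have hdist : dist w v < δ := by rwa [Real.dist_eq, abs_sub_comm, abs_of_nonneg (by linarith)]
  refine ⟨w, v, hw, hwv, hvb, ?_, hfwv⟩
  linarith [abs_sub_lt_iff.1 (hgδ w ⟨hw, hwv.trans hvb⟩ v ⟨hw.trans hwv, hvb⟩ hdist)]

lemma lt_one_of_tendsto_mul_one_sub {F : ℝ → ℝ} (hmono : Monotone F) (hle : ∀ t, F t ≤ 1)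
    {θ : ℕ → ℝ} (hθ : Tendsto θ atTop atTop) {x l : ℝ}
    (hlim : Tendsto (fun n : ℕ => n * (1 - F (θ n - x))) atTop (𝓝 l)) (hl : l ≠ 0) (t : ℝ) :
    F t < 1 := by
  by_contra! ht
  refine hl (tendsto_nhds_unique hlim (tendsto_const_nhds.congr' ?_))
  filter_upwards [hθ.eventually_ge_atTop (t + x)] with n hn
  rw [le_antisymm (hle _) (ht.trans (hmono (by linarith : t ≤ θ n - x))), sub_self, mul_zero]

lemma add_lt_of_dist_div_lt {n a b N N' α β L η : ℝ} (hn : 0 < n) (ha : a ≤ N)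
    (hb : N' + b ≤ n) (hα : dist (a / n) α < η) (hβ : dist (b / n) β < η)
    (hN : dist (N / n) L < η) (hN' : dist (N' / n) L < η) : α + β < 1 + 4 * η := by
  rw [Real.dist_eq, abs_lt] at hα hβ hN hN'
  have h1 : a / n ≤ N / n := div_le_div_of_nonneg_right ha hn.le
  have h2 : N' / n + b / n ≤ 1 := by rw [← add_div, div_le_one hn]; exact hb
  linarith [hα.2, hβ.2, hN.1, hN'.2]

open Classical in
noncomputable def countIn {Ω : Type*} (ξ : ℕ → Ω → ℝ) (n : ℕ) (s : Set ℝ) (ω : Ω) : ℕ :=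
  ((Finset.range n).filter fun k => ξ k ω ∈ s).card

def bandEvent {Ω : Type*} (ξ : ℕ → Ω → ℝ) (n j : ℕ) (B : Set ℝ) (t : ℝ) : Set Ω :=
  ⋃ S ∈ (Finset.range n).powersetCard j,
    ⋂ k ∈ Finset.range n, ξ k ⁻¹' (if k ∈ S then B else Set.Iic t)

section Deterministic

variable {Ω : Type*} {ξ : ℕ → Ω → ℝ} {n d : ℕ} {θ : ℝ} {ω : Ω} {s : Set ℝ}

lemma countIn_eq_sum_indicator :
    (countIn ξ n s ω : ℝ) = ∑ k ∈ Finset.range n, s.indicator 1 (ξ k ω) := by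
  classical
  simp only [countIn, Finset.card_filter, Set.indicator_apply, Pi.one_apply]
  push_cast
  rfl

lemma countIn_le_Ncount (h : ∀ k ∈ Finset.range n, ξ k ω ∈ s → deg ξ n k θ ω = d) :
    countIn ξ n s ω ≤ Ncount ξ n d θ ω := by
  classical
  exact Finset.card_le_card <| Finset.monotone_filter_right _ fun k hk hks => h k hk hks

lemma Ncount_add_countIn_le (h : ∀ k ∈ Finset.range n, ξ k ω ∈ s → deg ξ n k θ ω ≠ d) :
    Ncount ξ n d θ ω + countIn ξ n s ω ≤ n := by
  classical
  calc Ncount ξ n d θ ω + countIn ξ n s ω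
      ≤ Ncount ξ n d θ ω + ((Finset.range n).filter fun k => ¬ deg ξ n k θ ω = d).card :=
        Nat.add_le_add_left (Finset.card_le_card <|
          Finset.monotone_filter_right _ fun k hk hks => h k hk hks) _
    _ = n := by rw [Ncount, Finset.card_filter_add_card_filter_not, Finset.card_range]

lemma mem_bandEvent_iff {j : ℕ} {B : Set ℝ} {t : ℝ} :
    ω ∈ bandEvent ξ n j B t ↔ ∃ S ⊆ Finset.range n, S.card = j ∧
      (∀ k ∈ S, ξ k ω ∈ B) ∧ ∀ k ∈ Finset.range n, k ∉ S → ξ k ω ≤ t := by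
  simp only [bandEvent, Set.mem_iUnion, Set.mem_iInter, Finset.mem_powersetCard, Set.mem_preimage,
    exists_prop, and_assoc]
  refine exists_congr fun S => and_congr_right fun hS => and_congr_right fun _ => ?_
  constructor
  · intro h
    exact ⟨fun k hk => by simpa [hk] using h k (hS hk), fun k hk hkS => by simpa [hkS] using h k hk⟩
  · rintro ⟨hB, ht⟩ k hk
    split_ifs with hkS
    exacts [hB k hkS, ht k hk hkS]

lemma deg_eq_zero_of_mem_bandEvent {j : ℕ} {B : Set ℝ} {w x : ℝ} (hwx : w ≤ x)
    (hBw : ∀ b ∈ B, ∀ y ∈ Set.Icc 0 w, y + b ≤ θ) (hω : ω ∈ bandEvent ξ n j B (θ - x))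
    {k : ℕ} (hk : ξ k ω ∈ Set.Icc 0 w) : deg ξ n k θ ω = 0 := by
  obtain ⟨S, -, -, hSB, hrest⟩ := mem_bandEvent_iff.1 hω
  rw [deg, Finset.card_eq_zero, Finset.filter_eq_empty_iff]
  rintro ℓ hℓ ⟨-, hadj⟩
  by_cases hℓS : ℓ ∈ S
  · exact (hBw _ (hSB ℓ hℓS) _ hk).not_gt hadj
  · linarith [hrest ℓ hℓ hℓS, hk.2]

lemma deg_eq_of_mem_bandEvent {j : ℕ} {B : Set ℝ} {v x : ℝ} (hxv : x + v < θ)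
    (hBv : B ⊆ Set.Ioi (θ - v)) (hω : ω ∈ bandEvent ξ n j B (θ - x))
    {k : ℕ} (hk : ξ k ω ∈ Set.Ioc v x) : deg ξ n k θ ω = j := by
  obtain ⟨S, hSn, rfl, hSB, hrest⟩ := mem_bandEvent_iff.1 hω
  rw [deg]
  congr 1
  ext ℓ
  simp only [Finset.mem_filter]
  constructor
  · rintro ⟨hℓ, -, hadj⟩
    by_contra hℓS
    linarith [hrest ℓ hℓ hℓS, hk.2]
  · intro hℓS
    have hℓB : θ - v < ξ ℓ ω := hBv (hSB ℓ hℓS)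
    refine ⟨hSn hℓS, fun hℓk => ?_, by linarith [hk.1]⟩
    subst hℓk
    linarith [hk.2]

end Deterministic

section Probability

variable {Ω : Type*} [MeasurableSpace Ω] {P : Measure Ω} {ξ : ℕ → Ω → ℝ}

lemma measure_biInter_preimage_ite (hindep : iIndepFun ξ P)
    (hident : ∀ i, IdentDistrib (ξ i) (ξ 0) P P) {B C : Set ℝ} (hB : MeasurableSet B)
    (hC : MeasurableSet C) {n : ℕ} {S : Finset ℕ} (hS : S ⊆ Finset.range n) :
    P (⋂ k ∈ Finset.range n, ξ k ⁻¹' (if k ∈ S then B else C))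
      = P (ξ 0 ⁻¹' B) ^ S.card * P (ξ 0 ⁻¹' C) ^ (n - S.card) := by
  have hmeasSet : ∀ k, MeasurableSet (if k ∈ S then B else C) := fun k => by
    split_ifs <;> assumption
  rw [hindep.meas_biInter fun k _ => ⟨_, hmeasSet k, rfl⟩,
    Finset.prod_congr rfl fun k _ => (hident k).measure_mem_eq (hmeasSet k)]
  have hfilter : (Finset.range n).filter (· ∈ S) = S := by
    rw [Finset.filter_mem_eq_inter, Finset.inter_eq_right.2 hS]
  simp only [apply_ite (fun s => P (ξ 0 ⁻¹' s))]
  rw [Finset.prod_ite, Finset.prod_const, Finset.prod_const, Finset.filter_not,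
    Finset.card_sdiff_of_subset (Finset.filter_subset _ _), hfilter, Finset.card_range]

lemma measure_bandEvent (hmeas : ∀ i, Measurable (ξ i)) (hindep : iIndepFun ξ P)
    (hident : ∀ i, IdentDistrib (ξ i) (ξ 0) P P) {B : Set ℝ} (hB : MeasurableSet B) {t : ℝ}
    (hBt : B ⊆ Set.Ioi t) (n j : ℕ) :
    P (bandEvent ξ n j B t)
      = n.choose j * P (ξ 0 ⁻¹' B) ^ j * P (ξ 0 ⁻¹' Set.Iic t) ^ (n - j) := by
  have hdisj : Set.PairwiseDisjoint ↑((Finset.range n).powersetCard j) fun S : Finset ℕ =>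
      ⋂ k ∈ Finset.range n, ξ k ⁻¹' (if k ∈ S then B else Set.Iic t) := by
    intro S hS T hT hST
    rw [Finset.mem_coe, Finset.mem_powersetCard] at hS hT
    obtain ⟨k, hkS, hkT⟩ := Finset.not_subset.1 fun hsub =>
      hST (Finset.eq_of_subset_of_card_le hsub (hT.2.trans hS.2.symm).le)
    refine Set.disjoint_left.2 fun ω hωS hωT => ?_
    have hB' := Set.mem_iInter₂.1 hωS k (hS.1 hkS)
    have hI := Set.mem_iInter₂.1 hωT k (hS.1 hkS)
    simp only [hkS, hkT, if_true, if_false, Set.mem_preimage] at hB' hI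
    exact (Set.mem_Ioi.1 (hBt hB')).not_ge hI
  have hmeasSet : ∀ S : Finset ℕ, MeasurableSet
      (⋂ k ∈ Finset.range n, ξ k ⁻¹' (if k ∈ S then B else Set.Iic t)) := fun S =>
    Finset.measurableSet_biInter _ fun k _ => hmeas k (by split_ifs; exacts [hB, measurableSet_Iic])
  rw [bandEvent, measure_biUnion_finset hdisj fun S _ => hmeasSet S,
    Finset.sum_congr rfl fun S hS => ?_, Finset.sum_const, Finset.card_powersetCard,
    Finset.card_range, nsmul_eq_mul, mul_assoc]
  rw [Finset.mem_powersetCard] at hS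
  rw [measure_biInter_preimage_ite hindep hident hB measurableSet_Iic hS.1, hS.2]

lemma measureReal_bandEvent (hmeas : ∀ i, Measurable (ξ i))
    (hindep : iIndepFun ξ P) (hident : ∀ i, IdentDistrib (ξ i) (ξ 0) P P) {B : Set ℝ}
    (hB : MeasurableSet B) {t : ℝ} (hBt : B ⊆ Set.Ioi t) (n j : ℕ) :
    P.real (bandEvent ξ n j B t)
      = n.choose j * P.real (ξ 0 ⁻¹' B) ^ j * P.real (ξ 0 ⁻¹' Set.Iic t) ^ (n - j) := by
  simp only [measureReal_def, measure_bandEvent hmeas hindep hident hB hBt, ENNReal.toReal_mul,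
    ENNReal.toReal_pow, ENNReal.toReal_natCast]

variable [IsProbabilityMeasure P]

lemma tendstoInMeasure_countIn_div (hmeas : ∀ i, Measurable (ξ i))
    (hindep : iIndepFun ξ P) (hident : ∀ i, IdentDistrib (ξ i) (ξ 0) P P) {s : Set ℝ}
    (hs : MeasurableSet s) :
    TendstoInMeasure P (fun (n : ℕ) ω => (countIn ξ n s ω : ℝ) / n) atTop
      (fun _ => P.real (ξ 0 ⁻¹' s)) := by
  have hf : Measurable (s.indicator (1 : ℝ → ℝ)) := measurable_one.indicator hs
  set X : ℕ → Ω → ℝ := fun i => s.indicator 1 ∘ ξ i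
  have hX0 : X 0 = (ξ 0 ⁻¹' s).indicator 1 :=
    funext fun ω => (Set.indicator_comp_right (ξ 0) (x := ω)).symm
  have hint : Integrable (X 0) P := by
    rw [hX0]; exact (integrable_const 1).indicator (hmeas 0 hs)
  have hmean : P[X 0] = P.real (ξ 0 ⁻¹' s) := by
    rw [hX0, integral_indicator_one (hmeas 0 hs)]
  have hslln := strong_law_ae_real X hint
    (fun i j hij => (hindep.indepFun hij).comp hf hf) fun i => (hident i).comp hf
  rw [hmean] at hslln
  simp only [X, Function.comp_apply, ← countIn_eq_sum_indicator (n := _)] at hslln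
  refine tendstoInMeasure_of_tendsto_ae (fun n => Measurable.aestronglyMeasurable ?_) hslln
  simp only [countIn_eq_sum_indicator]
  exact (Finset.measurable_sum _ fun k _ => hf.comp (hmeas k)).div_const _

lemma eventually_le_measureReal_inter_dist_lt {E : ℕ → Set Ω} {ε : ℝ} (hε : 0 < ε)
    (hE : ∀ᶠ n in atTop, ε ≤ P.real (E n)) {X : ℕ → Ω → ℝ} {c : ℝ}
    (hX : TendstoInMeasure P X atTop fun _ => c) {η : ℝ} (hη : 0 < η) :
    ∀ᶠ n in atTop, ε / 2 ≤ P.real (E n ∩ {ω | dist (X n ω) c < η}) := by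
  have hbad := (tendstoInMeasure_iff_measureReal_dist.1 hX η hη).eventually_lt_const
    (half_pos hε)
  filter_upwards [hE, hbad] with n hEn hbadn
  have hcover : E n ⊆ (E n ∩ {ω | dist (X n ω) c < η}) ∪ {ω | η ≤ dist (X n ω) c} :=
    fun ω hω => (lt_or_ge (dist (X n ω) c) η).imp (fun h => ⟨hω, h⟩) id
  linarith [(measureReal_mono hcover (measure_ne_top P _)).trans (measureReal_union_le _ _)]

lemma eventually_exists_mem_bandEvent_dist_lt (hmeas : ∀ i, Measurable (ξ i))
    (hindep : iIndepFun ξ P) (hident : ∀ i, IdentDistrib (ξ i) (ξ 0) P P) {B : ℕ → Set ℝ}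
    (hBmeas : ∀ n, MeasurableSet (B n)) {t : ℕ → ℝ} (hBt : ∀ n, B n ⊆ Set.Ioi (t n)) {μ Λ : ℝ}
    (hμ : 0 < μ) (hB : Tendsto (fun n : ℕ => n * P.real (ξ 0 ⁻¹' B n)) atTop (𝓝 μ))
    (htail : Tendsto (fun n : ℕ => n * (1 - P.real (ξ 0 ⁻¹' Set.Iic (t n)))) atTop (𝓝 Λ))
    {s₁ s₂ : Set ℝ} (hs₁ : MeasurableSet s₁) (hs₂ : MeasurableSet s₂) {Y : ℕ → Ω → ℝ} {L : ℝ}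
    (hY : TendstoInMeasure P Y atTop fun _ => L) {η : ℝ} (hη : 0 < η) (j : ℕ) :
    ∀ᶠ n in atTop, ∃ ω ∈ bandEvent ξ n j (B n) (t n),
      dist ((countIn ξ n s₁ ω : ℝ) / n) (P.real (ξ 0 ⁻¹' s₁)) < η ∧
      dist ((countIn ξ n s₂ ω : ℝ) / n) (P.real (ξ 0 ⁻¹' s₂)) < η ∧ dist (Y n ω) L < η := by
  obtain ⟨ε, hε, hbinom⟩ := exists_pos_eventually_le_choose_mul_pow_mul_pow hμ hB htail j
  have hE : ∀ᶠ n in atTop, ε ≤ P.real (bandEvent ξ n j (B n) (t n)) := by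
    simpa only [measureReal_bandEvent hmeas hindep hident (hBmeas _) (hBt _)] using hbinom
  have h₁ := eventually_le_measureReal_inter_dist_lt hε hE
    (tendstoInMeasure_countIn_div hmeas hindep hident hs₁) hη
  have h₂ := eventually_le_measureReal_inter_dist_lt (by positivity) h₁
    (tendstoInMeasure_countIn_div hmeas hindep hident hs₂) hη
  have h₃ := eventually_le_measureReal_inter_dist_lt (by positivity) h₂ hY hη
  filter_upwards [h₃] with n hn
  obtain ⟨ω, ⟨⟨hωE, hω₁⟩, hω₂⟩, hω₃⟩ := nonempty_of_measure_ne_zero fun h0 => by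
    rw [measureReal_def, h0, ENNReal.toReal_zero] at hn
    linarith [show 0 < ε / 2 / 2 / 2 by positivity]
  exact ⟨ω, hωE, hω₁, hω₂, hω₃⟩

variable {X : Ω → ℝ}

lemma measureReal_preimage_Ioi (hX : Measurable X) (t : ℝ) :
    P.real (X ⁻¹' Set.Ioi t) = 1 - P.real (X ⁻¹' Set.Iic t) := by
  rw [← probReal_compl_eq_one_sub (hX measurableSet_Iic), ← Set.preimage_compl, Set.compl_Iic]

lemma measureReal_preimage_Ioc (hX : Measurable X) {a b : ℝ} (hab : a ≤ b) :
    P.real (X ⁻¹' Set.Ioc a b) = P.real (X ⁻¹' Set.Iic b) - P.real (X ⁻¹' Set.Iic a) := by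
  rw [← Set.Iic_sdiff_Iic, Set.preimage_sdiff,
    measureReal_sdiff (Set.preimage_mono (Set.Iic_subset_Iic.2 hab)) (hX measurableSet_Iic)]

lemma measureReal_preimage_Iic_union_Ioc (hX : Measurable X) {w v x : ℝ} (hwv : w ≤ v)
    (hvx : v ≤ x) :
    P.real (X ⁻¹' (Set.Iic w ∪ Set.Ioc v x))
      = P.real (X ⁻¹' Set.Iic w) + (P.real (X ⁻¹' Set.Iic x) - P.real (X ⁻¹' Set.Iic v)) := by
  have hdisj : Disjoint (Set.Iic w) (Set.Ioc v x) :=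
    Set.disjoint_left.2 fun y hyw hyv => (hyv.1.trans_le' hwv).not_ge hyw
  rw [Set.preimage_union, measureReal_union (hdisj.preimage X) (hX measurableSet_Ioc),
    measureReal_preimage_Ioc hX hvx]

end Probability

theorem not_tendstoInMeasure_Ncount_div {Ω : Type*} [MeasurableSpace Ω] {P : Measure Ω}
    [IsProbabilityMeasure P] {ξ : ℕ → Ω → ℝ} (hmeas : ∀ i, Measurable (ξ i))
    (hindep : iIndepFun ξ P) (hident : ∀ i, IdentDistrib (ξ i) (ξ 0) P P)
    (hξnn : ∀ i ω, 0 ≤ ξ i ω) {F : ℝ → ℝ} (hF : ∀ t, F t = P.real (ξ 0 ⁻¹' Set.Iic t))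
    {θ : ℕ → ℝ} (hθ : Tendsto θ atTop atTop) {B : ℕ → Set ℝ}
    (hBmeas : ∀ n, MeasurableSet (B n)) {w v x μ Λ : ℝ} (hwv : w ≤ v) (hvx : v ≤ x)
    (hBv : ∀ n, B n ⊆ Set.Ioi (θ n - v)) (hBw : ∀ n, ∀ b ∈ B n, ∀ y ∈ Set.Icc 0 w, y + b ≤ θ n)
    (hμ : 0 < μ) (hB : Tendsto (fun n : ℕ => n * P.real (ξ 0 ⁻¹' B n)) atTop (𝓝 μ))
    (htail : Tendsto (fun n : ℕ => n * (1 - F (θ n - x))) atTop (𝓝 Λ))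
    (hmass : 1 < F w + 2 * (F x - F v)) (d : ℕ) (L : ℝ) :
    ¬ TendstoInMeasure P (fun (n : ℕ) ω => (Ncount ξ n d (θ n) ω : ℝ) / n) atTop fun _ => L := by
  intro hL
  set A := Set.Iic w ∪ Set.Ioc v x
  set M := Set.Ioc v x
  have hAM : P.real (ξ 0 ⁻¹' A) + P.real (ξ 0 ⁻¹' M) = F w + 2 * (F x - F v) := by
    rw [measureReal_preimage_Iic_union_Ioc (hmeas 0) hwv hvx,
      measureReal_preimage_Ioc (hmeas 0) hvx, ← hF, ← hF, ← hF]
    ring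
  set η := (F w + 2 * (F x - F v) - 1) / 4 with hηdef
  have hgood := eventually_exists_mem_bandEvent_dist_lt (s₁ := A) (s₂ := M) hmeas hindep hident
    hBmeas    (fun n => (hBv n).trans (Set.Ioi_subset_Ioi (by linarith : θ n - x ≤ θ n - v))) hμ hB
    (by simpa only [← hF] using htail) (measurableSet_Iic.union measurableSet_Ioc)
    measurableSet_Ioc hL (by positivity : 0 < η)
  obtain ⟨n, ⟨ω₀, hω₀, hA₀, -, hN₀⟩, ⟨ω₁, hω₁, -, hM₁, hN₁⟩, hθn, hn⟩ :=
    ((hgood 0).and <| (hgood (max d 1)).and <|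
      (hθ.eventually_gt_atTop (x + v)).and (eventually_gt_atTop 0)).exists
  have hdeg₀ : ∀ k ∈ Finset.range n, ξ k ω₀ ∈ A → deg ξ n k (θ n) ω₀ = 0 := by
    rintro k - (hkw | hkM)
    · exact deg_eq_zero_of_mem_bandEvent (hwv.trans hvx) (hBw n) hω₀ ⟨hξnn k ω₀, hkw⟩
    · exact deg_eq_of_mem_bandEvent hθn (hBv n) hω₀ hkM
  have hdeg₁ : ∀ k ∈ Finset.range n, ξ k ω₁ ∈ M → deg ξ n k (θ n) ω₁ = max d 1 :=
    fun k _ hkM => deg_eq_of_mem_bandEvent hθn (hBv n) hω₁ hkM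
  have hn' : (0 : ℝ) < n := by exact_mod_cast hn
  rcases Nat.eq_zero_or_pos d with rfl | hd
  · have h₀ := countIn_le_Ncount hdeg₀
    have h₁ := Ncount_add_countIn_le fun k hk hkM => by
      rw [hdeg₁ k hk hkM]; exact one_ne_zero
    have := add_lt_of_dist_div_lt hn' (by exact_mod_cast h₀) (by exact_mod_cast h₁) hA₀ hM₁ hN₀ hN₁
    linarith [hηdef]
  · have h₀ := Ncount_add_countIn_le fun k hk hkA => (hdeg₀ k hk hkA).trans_ne hd.ne
    have h₁ := countIn_le_Ncount fun k hk hkM => (hdeg₁ k hk hkM).trans (max_eq_left hd)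
    have := add_lt_of_dist_div_lt hn' (by exact_mod_cast h₁) (by exact_mod_cast h₀) hM₁ hA₀ hN₁ hN₀
    linarith [hηdef]

theorem stmt17_general
    {Ω : Type*} [MeasurableSpace Ω] (P : Measure Ω) [IsProbabilityMeasure P]
    (ξ : ℕ → Ω → ℝ) (hmeas : ∀ i, Measurable (ξ i))
    (hindep : iIndepFun ξ P)
    (hident : ∀ i, IdentDistrib (ξ i) (ξ 0) P P)
    (hξnn : ∀ i ω, 0 ≤ ξ i ω)
    (F : ℝ → ℝ) (hF : ∀ x, F x = (P {ω | ξ 0 ω ≤ x}).toReal)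
    (hFcont : Continuous F) (hF0 : ∀ x ≤ (0 : ℝ), F x = 0)
    -- Assumption A
    (θstar : ℕ → ℝ)
    (hθtop : Tendsto θstar atTop atTop)
    (lam : ℝ → ℝ) (hlamnn : ∀ x, 0 ≤ x → 0 ≤ lam x)
    (hlamne : ∃ x, 0 ≤ x ∧ lam x ≠ 0)
    (hA : ∀ x, 0 ≤ x →
      Tendsto (fun n : ℕ => (n : ℝ) * (1 - F (θstar n - x))) atTop (𝓝 (lam x))) :
    ∀ d : ℕ, ¬ ∃ L : ℝ,
      TendstoInMeasure P
        (fun (n : ℕ) (ω : Ω) => (Ncount ξ n d (θstar n) ω : ℝ) / n) atTop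
        (fun _ => L) := by
  rintro d ⟨L, hL⟩
  have hF' : ∀ t, F t = P.real (ξ 0 ⁻¹' Set.Iic t) := hF
  have := Measure.isProbabilityMeasure_map (μ := P) (hmeas 0).aemeasurable
  have hFcdf : F = cdf (P.map (ξ 0)) := funext fun t => by
    rw [hF', cdf_eq_real, map_measureReal_apply (hmeas 0) measurableSet_Iic]
  have hmono : Monotone F := hFcdf ▸ monotone_cdf _
  have hF1 : Tendsto F atTop (𝓝 1) := hFcdf ▸ tendsto_cdf_atTop _
  obtain ⟨x₀, hx₀, hlx₀⟩ := hlamne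
  rcases (hlamnn 0 le_rfl).eq_or_lt with hl0 | hl0
  · have hγ : 0 < 1 - F x₀ := sub_pos.2 <| lt_one_of_tendsto_mul_one_sub hmono
      (fun t => hFcdf ▸ cdf_le_one _ t) hθtop (hA x₀ hx₀) hlx₀ x₀
    obtain ⟨w, v, hw, hwv, hvx₀, hFvw, hlwv⟩ := exists_increase_of_continuous hFcont hx₀
      (half_pos hγ) (hl0 ▸ (hlamnn x₀ hx₀).lt_of_ne' hlx₀)
    obtain ⟨x, hxF, hxx₀⟩ := ((hF1.eventually_const_lt (by linarith : 1 - (1 - F x₀) / 4 < 1)).and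
      (eventually_ge_atTop x₀)).exists
    refine not_tendstoInMeasure_Ncount_div hmeas hindep hident hξnn hF' hθtop
      (B := fun n => Set.Ioc (θstar n - v) (θstar n - w)) (fun _ => measurableSet_Ioc) hwv
      (hvx₀.trans hxx₀) (fun _ => Set.Ioc_subset_Ioi_self)
      (fun n b hb y hy => by linarith [hb.2, hy.2]) (sub_pos.2 hlwv) ?_
      (hA x (hx₀.trans hxx₀)) (by linarith [hmono hvx₀]) d L hL
    refine ((hA v (hw.trans hwv)).sub (hA w hw)).congr fun n => ?_
    rw [measureReal_preimage_Ioc (hmeas 0) (by linarith), ← hF', ← hF']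
    ring
  · obtain ⟨x, hxF, hx⟩ := ((hF1.eventually_const_lt (by norm_num : (1 : ℝ) / 2 < 1)).and
      (eventually_ge_atTop 0)).exists
    refine not_tendstoInMeasure_Ncount_div hmeas hindep hident hξnn hF' hθtop (w := -1) (v := 0)
      (B := fun n => Set.Ioi (θstar n)) (fun _ => measurableSet_Ioi) (by norm_num) hx
      (fun n => by rw [sub_zero]) (fun n b _ y hy => absurd (hy.1.trans hy.2) (by norm_num))
      hl0 ?_ (hA x hx) (by rw [hF0 _ (by norm_num), hF0 0 le_rfl]; linarith) d L hL
    refine (hA 0 le_rfl).congr fun n => ?_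
    rw [measureReal_preimage_Ioi (hmeas 0), ← hF', sub_zero]

/-- Under Assumption A, for every `d ∈ ℕ` there is no
constant `L(d)` such that the fraction `P_n(d;θ*_n) = N_n(d;θ*_n)/n`
converges in probability to `L(d)`. -/
theorem stmt17
    {Ω : Type*} [MeasurableSpace Ω] (P : Measure Ω) [IsProbabilityMeasure P]
    (ξ : ℕ → Ω → ℝ) (hmeas : ∀ i, Measurable (ξ i))
    (hindep : iIndepFun ξ P)
    (hident : ∀ i, IdentDistrib (ξ i) (ξ 0) P P)
    (hξnn : ∀ i ω, 0 ≤ ξ i ω)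
    (F : ℝ → ℝ) (hF : ∀ x, F x = (P {ω | ξ 0 ω ≤ x}).toReal)
    (hFcont : Continuous F) (hF0 : ∀ x ≤ (0 : ℝ), F x = 0)
    -- Assumption A
    (θstar : ℕ → ℝ) (hθpos : ∀ n, 0 < θstar n)
    (hθtop : Tendsto θstar atTop atTop)
    (lam : ℝ → ℝ) (hlamnn : ∀ x, 0 ≤ x → 0 ≤ lam x)
    (hlamne : ∃ x, 0 ≤ x ∧ lam x ≠ 0)
    (hA : ∀ x, 0 ≤ x →
      Tendsto (fun n : ℕ => (n : ℝ) * (1 - F (θstar n - x))) atTop (𝓝 (lam x))) :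
    ∀ d : ℕ, ¬ ∃ L : ℝ,
      TendstoInMeasure P
        (fun (n : ℕ) (ω : Ω) => (Ncount ξ n d (θstar n) ω : ℝ) / n) atTop
        (fun _ => L) :=
  stmt17_general P ξ hmeas hindep hident hξnn F hF hFcont hF0 θstar hθtop lam hlamnn hlamne hA
end
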